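/- arXiv:2302.02746 — 3 statements merged into one kernel-verified Lean document; each statement's English description precedes it below -/
import Mathlib

section
/- Let $F: \mathbb{R}^{n+1}_+ \to \mathbb{C}$ be measurable and $0 < p \le 2$. Define the vertical square function $\mathbb{V}F(x) := \big( \int_0^\infty |F(x,t)|^2 \, \frac{dt}{t} \big)^{1/2}$ and the conical square function $\mathbb{S}F(x) := \big( \iint_{|x-y|<t} |F(y,t)|^2 \, \frac{dy\,dt}{t^{n+1}} \big)^{1/2}$. Then $\| \mathbb{V}F \|_{L^p(\mathbb{R}^n)} \le C(n,p) \| \mathbb{S}F \|_{L^p(\mathbb{R}^n)}$. -/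
open MeasureTheory ENNReal

/-- Vertical square function. -/
noncomputable def vertSq (n : ℕ) (F : (Fin n → ℝ) → ℝ → ℂ) (x : Fin n → ℝ) : ℝ≥0∞ :=
  (∫⁻ t in Set.Ioi (0 : ℝ), (‖F x t‖₊ : ℝ≥0∞) ^ 2 / ENNReal.ofReal t) ^ ((1 : ℝ) / 2)

/-- Conical square function. -/
noncomputable def conSq (n : ℕ) (F : (Fin n → ℝ) → ℝ → ℂ) (x : Fin n → ℝ) : ℝ≥0∞ :=
  (∫⁻ p in {p : (Fin n → ℝ) × ℝ | dist x p.1 < p.2},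
      (‖F p.1 p.2‖₊ : ℝ≥0∞) ^ 2 / ENNReal.ofReal (p.2 ^ (n + 1))) ^ ((1 : ℝ) / 2)

open Set Metric Module

/-!
Good-`λ` argument. Fix `a > 0` and let `U = {S ≤ a}`. The points `x` around which `U` has
density at least `1/2` in every ball `B(x, r)` form a set `D` whose complement is controlled,
through the Vitali covering lemma, by `|Uᶜ| = |{S > a}|`. Since `|U ∩ B(x, t)| ≥ |B(x, t)| / 2`
is comparable to `tⁿ` for `x ∈ D`, Fubini gives `∫_D V² ≲ ∫_U S²`, and Chebyshev's inequality
yields `|{V > a}| ≲ |{S > a}| + a⁻² ∫_{S ≤ a} S²`. Integrating against `p a^(p-1) da`, the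
second term becomes `∫ S² · S^(p-2) / (2 - p)`, which is where `p < 2` is needed; for `p = 2`
Fubini alone gives `∫ S² = |B(0, 1)| ∫ V²`.
-/

section LayerCake

theorem lintegral_Ioi_one_rpow_eq_top {r : ℝ} (hr : -1 ≤ r) :
    ∫⁻ t in Ioi (1 : ℝ), ENNReal.ofReal (t ^ r) = ∞ := by
  have h_nonint : ¬ IntegrableOn (fun t : ℝ ↦ t ^ r) (Ioi 1) := by
    rw [integrableOn_Ioi_rpow_iff one_pos]; linarith
  contrapose! h_nonint
  refine (lintegral_ofReal_ne_top_iff_integrable (by fun_prop) ?_).1 h_nonint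
  filter_upwards [ae_restrict_mem measurableSet_Ioi] with t ht
  exact Real.rpow_nonneg (zero_le_one.trans (le_of_lt ht)) r

variable {α : Type*} [MeasurableSpace α] {μ : Measure α}

theorem ENNReal.lintegral_rpow_eq_lintegral_meas_lt_mul {f : α → ℝ≥0∞} (hf : Measurable f) {p : ℝ}
    (hp : 0 < p) :
    ∫⁻ x, f x ^ p ∂μ =
      ENNReal.ofReal p * ∫⁻ t in Ioi 0, μ {x | ENNReal.ofReal t < f x} *
        ENNReal.ofReal (t ^ (p - 1)) := by
  by_cases h_top : μ {x | f x = ∞} = 0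
  · have h_fin : ∀ᵐ x ∂μ, f x ≠ ∞ := by simpa [ae_iff] using h_top
    have h_real : ∫⁻ x, f x ^ p ∂μ = ∫⁻ x, ENNReal.ofReal ((f x).toReal ^ p) ∂μ := by
      refine lintegral_congr_ae ?_
      filter_upwards [h_fin] with x hx
      rw [← ENNReal.ofReal_rpow_of_nonneg ENNReal.toReal_nonneg hp.le, ENNReal.ofReal_toReal hx]
    rw [h_real, MeasureTheory.lintegral_rpow_eq_lintegral_meas_lt_mul μ
      (.of_forall fun _ ↦ ENNReal.toReal_nonneg) hf.ennreal_toReal.aemeasurable hp]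
    congr 1
    refine setLIntegral_congr_fun measurableSet_Ioi fun t ht ↦ ?_
    congr 1
    refine measure_congr ?_
    filter_upwards [h_fin] with x hx
    exact propext (ENNReal.ofReal_lt_iff_lt_toReal (le_of_lt ht) hx).symm
  · have h_lhs : ∫⁻ x, f x ^ p ∂μ = ∞ := by
      refine top_le_iff.1 ?_
      calc ∞ = ∫⁻ _ in {x | f x = ∞}, ∞ ∂μ := by rw [setLIntegral_const, top_mul h_top]
        _ = ∫⁻ x in {x | f x = ∞}, f x ^ p ∂μ :=
          (setLIntegral_congr_fun (hf (measurableSet_singleton ∞)) fun x hx ↦ by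
            rw [show f x = ∞ from hx, top_rpow_of_pos hp])
        _ ≤ ∫⁻ x, f x ^ p ∂μ := setLIntegral_le_lintegral _ _
    have h_rhs : ∫⁻ t in Ioi 0, μ {x | ENNReal.ofReal t < f x} * ENNReal.ofReal (t ^ (p - 1))
        = ∞ := by
      refine top_le_iff.1 ?_
      calc ∞ = ∫⁻ t in Ioi 1, μ {x | f x = ∞} * ENNReal.ofReal (t ^ (p - 1)) := by
            rw [lintegral_const_mul _ (by fun_prop),
              lintegral_Ioi_one_rpow_eq_top (by linarith), mul_top h_top]
        _ ≤ ∫⁻ t in Ioi 1, μ {x | ENNReal.ofReal t < f x} * ENNReal.ofReal (t ^ (p - 1)) := by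
            gcongr with t x
            intro hx
            rw [hx]
            exact ofReal_lt_top
        _ ≤ _ := lintegral_mono_set (Ioi_subset_Ioi zero_le_one)
    rw [h_lhs, h_rhs, mul_top (by simpa using hp)]

theorem rpow_mul_lintegral_indicator_rpow_le {a : ℝ≥0∞} {p q : ℝ} (hp : 0 < p) (hpq : p < q) :
    a ^ q * ∫⁻ t in Ioi 0, {t | a ≤ ENNReal.ofReal t}.indicator
        (fun t ↦ ENNReal.ofReal (t ^ (p - q - 1))) t
      ≤ (ENNReal.ofReal (q - p))⁻¹ * a ^ p := by
  rcases eq_or_ne a 0 with rfl | ha0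
  · simp [zero_rpow_of_pos (hp.trans hpq)]
  rcases eq_or_ne a ∞ with rfl | ha
  · simp
  set s := a.toReal
  have hs : 0 < s := ENNReal.toReal_pos ha0 ha
  have h_set : {t : ℝ | a ≤ ENNReal.ofReal t} ∩ Ioi 0 = Ici s := by
    ext t
    simp only [mem_inter_iff, mem_ofPred_eq, mem_Ioi, mem_Ici]
    constructor
    · rintro ⟨h, ht⟩
      exact (ENNReal.le_ofReal_iff_toReal_le ha ht.le).1 h
    · intro h
      exact ⟨(ENNReal.le_ofReal_iff_toReal_le ha (hs.le.trans h)).2 h, hs.trans_le h⟩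
  have h_tail : ∫⁻ t in Ici s, ENNReal.ofReal (t ^ (p - q - 1))
      = ENNReal.ofReal (s ^ (p - q) / (q - p)) := by
    rw [← Measure.restrict_congr_set Ioi_ae_eq_Ici, ← ofReal_integral_eq_lintegral_ofReal
      (integrableOn_Ioi_rpow_of_lt (by linarith) hs), integral_Ioi_rpow_of_lt (by linarith) hs]
    · congr 1
      rw [show p - q - 1 + 1 = p - q by ring, neg_div, ← div_neg, neg_sub]
    · filter_upwards [ae_restrict_mem measurableSet_Ioi] with t ht
      exact Real.rpow_nonneg (hs.le.trans (le_of_lt ht)) _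
  rw [lintegral_indicator (measurableSet_le measurable_const measurable_ofReal),
    Measure.restrict_restrict (measurableSet_le measurable_const measurable_ofReal), h_set,
    h_tail, div_eq_mul_inv, ENNReal.ofReal_mul (by positivity),
    ofReal_inv_of_pos (by linarith), ← ofReal_rpow_of_pos hs, ofReal_toReal ha,
    ← mul_assoc, ← rpow_add _ _ ha0 ha, add_sub_cancel, mul_comm]

theorem lintegral_rpow_mul_setLIntegral_le [SFinite μ] {g : α → ℝ≥0∞} (hg : Measurable g)
    {p q : ℝ} (hp : 0 < p) (hpq : p < q) :
    ∫⁻ t in Ioi 0, ENNReal.ofReal (t ^ (p - q - 1)) *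
        ∫⁻ x in {x | g x ≤ ENNReal.ofReal t}, g x ^ q ∂μ
      ≤ (ENNReal.ofReal (q - p))⁻¹ * ∫⁻ x, g x ^ p ∂μ := by
  set w : ℝ → ℝ≥0∞ := fun t ↦ ENNReal.ofReal (t ^ (p - q - 1))
  have h_meas : Measurable (Function.uncurry fun t x ↦
      g x ^ q * {t | g x ≤ ENNReal.ofReal t}.indicator w t) := by
    refine ((hg.comp measurable_snd).pow_const q).mul ?_
    simp only [indicator_apply, mem_ofPred_eq]
    exact Measurable.ite (measurableSet_le (hg.comp measurable_snd)
      (measurable_ofReal.comp measurable_fst)) (by fun_prop) measurable_const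
  calc ∫⁻ t in Ioi 0, w t * ∫⁻ x in {x | g x ≤ ENNReal.ofReal t}, g x ^ q ∂μ
      = ∫⁻ t in Ioi 0, ∫⁻ x, g x ^ q * {t | g x ≤ ENNReal.ofReal t}.indicator w t ∂μ := by
        refine lintegral_congr fun t ↦ ?_
        rw [← lintegral_indicator (measurableSet_le hg measurable_const),
          ← lintegral_const_mul' _ _ ofReal_ne_top]
        refine lintegral_congr fun x ↦ ?_
        by_cases h : g x ≤ ENNReal.ofReal t <;> simp [h, w, mul_comm]
    _ = ∫⁻ x, (∫⁻ t in Ioi 0, g x ^ q * {t | g x ≤ ENNReal.ofReal t}.indicator w t) ∂μ :=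
        lintegral_lintegral_swap h_meas.aemeasurable
    _ ≤ ∫⁻ x, (ENNReal.ofReal (q - p))⁻¹ * g x ^ p ∂μ := by
        refine lintegral_mono fun x ↦ ?_
        rw [lintegral_const_mul _ ((by fun_prop : Measurable w).indicator
          (measurableSet_le measurable_const measurable_ofReal))]
        exact rpow_mul_lintegral_indicator_rpow_le hp hpq
    _ = (ENNReal.ofReal (q - p))⁻¹ * ∫⁻ x, g x ^ p ∂μ :=
        lintegral_const_mul _ (hg.pow_const p)

theorem lintegral_rpow_le_of_good_lambda [SFinite μ] {f g : α → ℝ≥0∞} (hf : Measurable f)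
    (hg : Measurable g) {p q : ℝ} (hp : 0 < p) (hpq : p < q) {K B : ℝ≥0∞}
    (h : ∀ t : ℝ, 0 < t → μ {x | ENNReal.ofReal t < f x} ≤
      K * μ {x | ENNReal.ofReal t < g x} +
        B * ((ENNReal.ofReal t ^ q)⁻¹ * ∫⁻ x in {x | g x ≤ ENNReal.ofReal t}, g x ^ q ∂μ)) :
    ∫⁻ x, f x ^ p ∂μ ≤
      (K + ENNReal.ofReal p * B * (ENNReal.ofReal (q - p))⁻¹) * ∫⁻ x, g x ^ p ∂μ := by
  set w : ℝ → ℝ≥0∞ := fun t ↦ ENNReal.ofReal (t ^ (p - 1))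
  set I : ℝ → ℝ≥0∞ := fun t ↦ ∫⁻ x in {x | g x ≤ ENNReal.ofReal t}, g x ^ q ∂μ
  have h_weight : ∀ t : ℝ, 0 < t →
      (ENNReal.ofReal t ^ q)⁻¹ * w t = ENNReal.ofReal (t ^ (p - q - 1)) := fun t ht ↦ by
    rw [ofReal_rpow_of_pos ht, ← ofReal_inv_of_pos (by positivity),
      ← ENNReal.ofReal_mul (by positivity), ← Real.rpow_neg ht.le, ← Real.rpow_add ht]
    ring_nf
  have h_tail_anti : Antitone fun t : ℝ ↦ μ {x | ENNReal.ofReal t < g x} := fun s t hst ↦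
    measure_mono fun x hx ↦ (ENNReal.ofReal_le_ofReal hst).trans_lt hx
  have h_trunc_mono : Monotone I := fun s t hst ↦
    lintegral_mono_set fun x hx ↦ le_trans hx (ENNReal.ofReal_le_ofReal hst)
  have h_trunc_meas : Measurable fun t : ℝ ↦ ENNReal.ofReal (t ^ (p - q - 1)) * I t :=
    (by fun_prop : Measurable fun t : ℝ ↦ ENNReal.ofReal (t ^ (p - q - 1))).mul
      h_trunc_mono.measurable
  have h_tail_meas : Measurable fun t : ℝ ↦ μ {x | ENNReal.ofReal t < g x} * w t :=
    h_tail_anti.measurable.mul (by fun_prop)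
  calc ∫⁻ x, f x ^ p ∂μ
      = ENNReal.ofReal p * ∫⁻ t in Ioi 0, μ {x | ENNReal.ofReal t < f x} * w t :=
        ENNReal.lintegral_rpow_eq_lintegral_meas_lt_mul hf hp
    _ ≤ ENNReal.ofReal p * ∫⁻ t in Ioi 0, (K * (μ {x | ENNReal.ofReal t < g x} * w t) +
          B * (ENNReal.ofReal (t ^ (p - q - 1)) * I t)) := by
        gcongr ENNReal.ofReal p * ?_
        refine setLIntegral_mono' measurableSet_Ioi fun t ht ↦ ?_
        calc μ {x | ENNReal.ofReal t < f x} * w t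
            ≤ (K * μ {x | ENNReal.ofReal t < g x} +
                B * ((ENNReal.ofReal t ^ q)⁻¹ * I t)) * w t := by gcongr; exact h t ht
          _ = _ := by rw [← h_weight t ht]; ring
    _ = ENNReal.ofReal p * (K * (∫⁻ t in Ioi 0, μ {x | ENNReal.ofReal t < g x} * w t) +
          B * ∫⁻ t in Ioi 0, ENNReal.ofReal (t ^ (p - q - 1)) * I t) := by
        rw [lintegral_add_left (h_tail_meas.const_mul K), lintegral_const_mul _ h_tail_meas,
          lintegral_const_mul _ h_trunc_meas]
    _ ≤ ENNReal.ofReal p * (K * (∫⁻ t in Ioi 0, μ {x | ENNReal.ofReal t < g x} * w t) +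
          B * ((ENNReal.ofReal (q - p))⁻¹ * ∫⁻ x, g x ^ p ∂μ)) := by
        gcongr
        exact lintegral_rpow_mul_setLIntegral_le hg hp hpq
    _ = (K + ENNReal.ofReal p * B * (ENNReal.ofReal (q - p))⁻¹) * ∫⁻ x, g x ^ p ∂μ := by
        rw [ENNReal.lintegral_rpow_eq_lintegral_meas_lt_mul hg hp]
        ring

end LayerCake

theorem measure_le_two_mul_compl_inter_of_two_mul_inter_lt {α : Type*} [MeasurableSpace α]
    {μ : Measure α} {s t : Set α} (ht : MeasurableSet t) (hs : μ s ≠ ∞)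
    (h : 2 * μ (t ∩ s) < μ s) : μ s ≤ 2 * μ (tᶜ ∩ s) := by
  rw [inter_comm] at h ⊢
  rw [← sdiff_eq]
  rw [← measure_inter_add_sdiff s ht, two_mul] at h ⊢
  have h_fin : μ (s ∩ t) ≠ ∞ := ne_top_of_le_ne_top hs (measure_mono inter_subset_left)
  have h_lt : μ (s ∩ t) < μ (s \ t) := (ENNReal.add_lt_add_iff_left h_fin).1 h
  gcongr

section Density

variable {E : Type*} [NormedAddCommGroup E] [NormedSpace ℝ E] [FiniteDimensional ℝ E]
  [MeasurableSpace E] [BorelSpace E] (μ : Measure E) [μ.IsAddHaarMeasure]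

theorem exists_radius_bound_of_measure_ball_le_two_mul [Nontrivial E] {U : Set E}
    (hU : μ U ≠ ∞) :
    ∃ R : ℝ, ∀ x : E, ∀ r > 0, μ (ball x r) ≤ 2 * μ (U ∩ ball x r) → r ≤ R := by
  set c := μ (ball (0 : E) 1)
  have hc : c ≠ 0 := (measure_ball_pos μ _ one_pos).ne'
  refine ⟨max 1 (2 * μ U / c).toReal, fun x r hr hx ↦ ?_⟩
  rcases le_or_gt r 1 with h | h
  · exact h.trans (le_max_left _ _)
  refine le_max_of_le_right ((ENNReal.ofReal_le_iff_le_toReal ?_).1 ?_)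
  · exact ENNReal.div_ne_top (mul_ne_top ofNat_ne_top hU) hc
  rw [ENNReal.le_div_iff_mul_le (.inl hc) (.inl measure_ball_lt_top.ne)]
  calc ENNReal.ofReal r * c ≤ ENNReal.ofReal (r ^ finrank ℝ E) * c := by
        gcongr; exact le_self_pow₀ h.le finrank_pos.ne'
    _ = μ (ball x r) := (μ.addHaar_ball_of_pos x hr).symm
    _ ≤ 2 * μ (U ∩ ball x r) := hx
    _ ≤ 2 * μ U := by gcongr; exact inter_subset_left

/-- The weak-type `(1, 1)` bound for the centred maximal function of `𝟙_U` at height `1/2`. -/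
theorem measure_setOf_exists_ball_le_two_mul_le {U : Set E} (hU : MeasurableSet U) :
    μ {x | ∃ r > 0, μ (ball x r) ≤ 2 * μ (U ∩ ball x r)} ≤ 2 * 4 ^ finrank ℝ E * μ U := by
  set A := {x | ∃ r > 0, μ (ball x r) ≤ 2 * μ (U ∩ ball x r)}
  rcases subsingleton_or_nontrivial E with hE | hE
  · refine (measure_mono fun x hx ↦ ?_).trans (le_mul_of_one_le_left' ?_)
    · obtain ⟨r, hr, hx⟩ := hx
      have hpos : μ (U ∩ ball x r) ≠ 0 := fun h0 ↦ (measure_ball_pos μ x hr).ne'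
        (nonpos_iff_eq_zero.1 (by simpa [h0] using hx))
      obtain ⟨y, hyU, -⟩ := nonempty_of_measure_ne_zero hpos
      rwa [Subsingleton.elim x y]
    · exact one_le_two.trans (le_mul_of_one_le_right' (one_le_pow₀ (by norm_num)))
  rcases eq_or_ne (μ U) ∞ with hU_top | hU_top
  · simp [hU_top]
  obtain ⟨R, hR⟩ := exists_radius_bound_of_measure_ball_le_two_mul μ hU_top
  choose! r hr_pos hr using fun x (hx : x ∈ A) ↦ hx
  obtain ⟨u, huA, hdisj, hcov⟩ := Vitali.exists_disjoint_subfamily_covering_enlargement_ball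
    A id r R (fun x hx ↦ hR x _ (hr_pos x hx) (hr x hx)) 4 (by norm_num)
  have hu : u.Countable := hdisj.countable_of_isOpen (fun _ _ ↦ isOpen_ball)
    fun b hb ↦ nonempty_ball.2 (hr_pos b (huA hb))
  calc μ A ≤ μ (⋃ b ∈ u, ball b (4 * r b)) := measure_mono fun x hx ↦ by
        obtain ⟨b, hb, hsub⟩ := hcov x hx
        exact mem_biUnion hb (hsub (mem_ball_self (hr_pos x hx)))
    _ ≤ ∑' b : u, μ (ball (b : E) (4 * r b)) := measure_biUnion_le μ hu _
    _ = ∑' b : u, 4 ^ finrank ℝ E * μ (ball (b : E) (r b)) := by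
        congr 1; ext b
        rw [μ.addHaar_ball_mul_of_pos _ four_pos, μ.addHaar_ball_center (b : E),
          ENNReal.ofReal_pow zero_le_four, ENNReal.ofReal_ofNat]
    _ ≤ ∑' b : u, 4 ^ finrank ℝ E * (2 * μ (U ∩ ball (b : E) (r b))) := by
        gcongr with b; exact hr b (huA b.2)
    _ = 2 * 4 ^ finrank ℝ E * μ (⋃ b ∈ u, U ∩ ball b (r b)) := by
        have hdisj' : u.PairwiseDisjoint fun b ↦ U ∩ ball b (r b) :=
          hdisj.mono fun _ ↦ inter_subset_right
        rw [measure_biUnion hu hdisj' fun _ _ ↦ hU.inter measurableSet_ball,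
          ← ENNReal.tsum_mul_left]
        congr 1; ext b; ring
    _ ≤ 2 * 4 ^ finrank ℝ E * μ U := by
        gcongr; exact iUnion₂_subset fun _ _ ↦ inter_subset_left

end Density

section SquareFunctions

variable {n : ℕ} {F : (Fin n → ℝ) → ℝ → ℂ}

theorem vertSq_rpow_two (x : Fin n → ℝ) :
    vertSq n F x ^ (2 : ℝ) = ∫⁻ t in Ioi 0, (‖F x t‖₊ : ℝ≥0∞) ^ 2 / ENNReal.ofReal t := by
  rw [vertSq, one_div, rpow_inv_rpow two_ne_zero]

theorem conSq_rpow_two (y : Fin n → ℝ) :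
    conSq n F y ^ (2 : ℝ) = ∫⁻ q : (Fin n → ℝ) × ℝ, (ball q.1 q.2).indicator
      (fun _ ↦ (‖F q.1 q.2‖₊ : ℝ≥0∞) ^ 2 / ENNReal.ofReal (q.2 ^ (n + 1))) y := by
  rw [conSq, one_div, rpow_inv_rpow two_ne_zero,
    ← lintegral_indicator (isOpen_lt (by fun_prop) continuous_snd).measurableSet]
  rfl

variable (hF : Measurable (Function.uncurry F))
include hF

theorem measurable_vertSq : Measurable (vertSq n F) := by
  have hF' : Measurable fun q : (Fin n → ℝ) × ℝ ↦ F q.1 q.2 := hF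
  exact (Measurable.lintegral_prod_right' (f := fun q : (Fin n → ℝ) × ℝ ↦
    (‖F q.1 q.2‖₊ : ℝ≥0∞) ^ 2 / ENNReal.ofReal q.2) (by fun_prop)).pow_const _

theorem measurable_cone_indicator : Measurable fun z : (Fin n → ℝ) × ((Fin n → ℝ) × ℝ) ↦
    (ball z.2.1 z.2.2).indicator
      (fun _ ↦ (‖F z.2.1 z.2.2‖₊ : ℝ≥0∞) ^ 2 / ENNReal.ofReal (z.2.2 ^ (n + 1))) z.1 := by
  have hF' : Measurable fun q : (Fin n → ℝ) × ℝ ↦ F q.1 q.2 := hF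
  have h_cone : MeasurableSet {z : (Fin n → ℝ) × ((Fin n → ℝ) × ℝ) | dist z.1 z.2.1 < z.2.2} :=
    (isOpen_lt (by fun_prop) (by fun_prop)).measurableSet
  exact Measurable.indicator (by fun_prop) h_cone

theorem measurable_conSq_rpow_two : Measurable fun y ↦ conSq n F y ^ (2 : ℝ) := by
  simp_rw [conSq_rpow_two]
  exact (measurable_cone_indicator hF).lintegral_prod_right'

theorem measurable_conSq : Measurable (conSq n F) := by
  simpa only [rpow_rpow_inv two_ne_zero] using
    (measurable_conSq_rpow_two hF).pow_const (2 : ℝ)⁻¹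

theorem setLIntegral_conSq_rpow_two (U : Set (Fin n → ℝ)) :
    ∫⁻ y in U, conSq n F y ^ (2 : ℝ) = ∫⁻ q : (Fin n → ℝ) × ℝ,
      (‖F q.1 q.2‖₊ : ℝ≥0∞) ^ 2 / ENNReal.ofReal (q.2 ^ (n + 1)) * volume (U ∩ ball q.1 q.2) := by
  simp_rw [conSq_rpow_two]
  rw [lintegral_lintegral_swap (measurable_cone_indicator hF).aemeasurable]
  refine lintegral_congr fun q ↦ ?_
  rw [lintegral_indicator_const measurableSet_ball, Measure.restrict_apply measurableSet_ball,
    inter_comm]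

theorem mul_setLIntegral_vertSq_rpow_two {D : Set (Fin n → ℝ)} (hD : MeasurableSet D) :
    volume (ball (0 : Fin n → ℝ) 1) * ∫⁻ x in D, vertSq n F x ^ (2 : ℝ) =
      ∫⁻ q in D ×ˢ Ioi 0, (‖F q.1 q.2‖₊ : ℝ≥0∞) ^ 2 / ENNReal.ofReal (q.2 ^ (n + 1)) *
        volume (ball q.1 q.2) := by
  set c := volume (ball (0 : Fin n → ℝ) 1)
  have hc : c ≠ ∞ := measure_ball_lt_top.ne
  have hF' : Measurable fun q : (Fin n → ℝ) × ℝ ↦ F q.1 q.2 := hF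
  calc c * ∫⁻ x in D, vertSq n F x ^ (2 : ℝ)
      = ∫⁻ x in D, ∫⁻ t in Ioi 0, c * ((‖F x t‖₊ : ℝ≥0∞) ^ 2 / ENNReal.ofReal t) := by
        rw [← lintegral_const_mul' _ _ hc]
        simp_rw [vertSq_rpow_two, ← lintegral_const_mul' _ _ hc]
    _ = ∫⁻ q in D ×ˢ Ioi 0, c * ((‖F q.1 q.2‖₊ : ℝ≥0∞) ^ 2 / ENNReal.ofReal q.2) := by
        rw [Measure.volume_eq_prod, ← Measure.prod_restrict,
          lintegral_prod _ (by fun_prop : Measurable fun q : (Fin n → ℝ) × ℝ ↦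
            c * ((‖F q.1 q.2‖₊ : ℝ≥0∞) ^ 2 / ENNReal.ofReal q.2)).aemeasurable]
    _ = _ := by
        refine setLIntegral_congr_fun (hD.prod measurableSet_Ioi) fun q hq ↦ ?_
        have ht : 0 < q.2 := hq.2
        have hs : ENNReal.ofReal (q.2 ^ n) ≠ 0 := (ofReal_pos.2 (pow_pos ht n)).ne'
        rw [volume.addHaar_ball_of_pos _ ht, finrank_fin_fun, pow_succ q.2 n,
          ENNReal.ofReal_mul (pow_pos ht n).le, ← ENNReal.mul_div_mul_left _ _ hs ofReal_ne_top,
          mul_div_assoc]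
        ring

theorem lintegral_conSq_rpow_two :
    ∫⁻ y, conSq n F y ^ (2 : ℝ) =
      volume (ball (0 : Fin n → ℝ) 1) * ∫⁻ x, vertSq n F x ^ (2 : ℝ) := by
  have h_vert := mul_setLIntegral_vertSq_rpow_two hF MeasurableSet.univ
  rw [setLIntegral_univ] at h_vert
  rw [h_vert, ← setLIntegral_univ, setLIntegral_conSq_rpow_two hF]
  simp_rw [univ_inter]
  refine (setLIntegral_eq_of_support_subset fun q hq ↦ ?_).symm
  refine ⟨mem_univ _, mem_Ioi.2 (not_le.1 fun h_nonpos ↦ hq ?_)⟩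
  simp only [ball_eq_empty.2 h_nonpos, measure_empty, mul_zero]

theorem mul_setLIntegral_vertSq_rpow_two_le {U D : Set (Fin n → ℝ)} (hD : MeasurableSet D)
    (hD_dense : ∀ x ∈ D, ∀ r > 0, volume (ball x r) ≤ 2 * volume (U ∩ ball x r)) :
    volume (ball (0 : Fin n → ℝ) 1) * ∫⁻ x in D, vertSq n F x ^ (2 : ℝ) ≤
      2 * ∫⁻ y in U, conSq n F y ^ (2 : ℝ) := by
  rw [mul_setLIntegral_vertSq_rpow_two hF hD, setLIntegral_conSq_rpow_two hF,
    ← lintegral_const_mul' _ _ ofNat_ne_top]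
  refine (setLIntegral_mono' (hD.prod measurableSet_Ioi) fun q hq ↦ ?_).trans
    (setLIntegral_le_lintegral _ _)
  rw [mul_left_comm]
  gcongr
  exact hD_dense q.1 hq.1 q.2 hq.2

theorem volume_setOf_lt_vertSq_le {a : ℝ≥0∞} (ha₀ : a ≠ 0) (ha : a ≠ ∞) :
    volume {x | a < vertSq n F x} ≤
      2 * 4 ^ n * volume {y | a < conSq n F y} +
        2 * (volume (ball (0 : Fin n → ℝ) 1))⁻¹ *
          ((a ^ (2 : ℝ))⁻¹ * ∫⁻ y in {y | conSq n F y ≤ a}, conSq n F y ^ (2 : ℝ)) := by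
  set c := volume (ball (0 : Fin n → ℝ) 1)
  set U := {y | conSq n F y ≤ a}
  have hU : MeasurableSet U := measurableSet_le (measurable_conSq hF) measurable_const
  set A := {x | ∃ r > 0, volume (ball x r) ≤ 2 * volume (Uᶜ ∩ ball x r)}
  set D := (toMeasurable volume A)ᶜ
  have hD : MeasurableSet D := (measurableSet_toMeasurable _ _).compl
  have hD_dense : ∀ x ∈ D, ∀ r > 0, volume (ball x r) ≤ 2 * volume (U ∩ ball x r) := by
    intro x hx r hr
    by_contra! h
    exact hx (subset_toMeasurable _ _ ⟨r, hr,
      measure_le_two_mul_compl_inter_of_two_mul_inter_lt hU measure_ball_lt_top.ne h⟩)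
  have hA : volume (toMeasurable volume A) ≤ 2 * 4 ^ n * volume {y | a < conSq n F y} := by
    rw [measure_toMeasurable]
    refine (measure_setOf_exists_ball_le_two_mul_le volume hU.compl).trans_eq ?_
    simp only [finrank_fin_fun, U, compl_ofPred, not_le]
  have ha₂ : a ^ (2 : ℝ) ≠ 0 := by simp [ha₀]
  have ha₂' : a ^ (2 : ℝ) ≠ ∞ := by simp [ha]
  have h_cheb : volume ({x | a < vertSq n F x} ∩ D) ≤
      (a ^ (2 : ℝ))⁻¹ * ∫⁻ x in D, vertSq n F x ^ (2 : ℝ) := by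
    rw [← ENNReal.mul_le_iff_le_inv ha₂ ha₂', ← Measure.restrict_apply' hD]
    refine le_trans ?_ (mul_meas_ge_le_lintegral₀
      ((measurable_vertSq hF).pow_const _).aemeasurable (a ^ (2 : ℝ)))
    gcongr with x
    exact fun hx ↦ ENNReal.rpow_le_rpow hx.le zero_le_two
  have h_fub : ∫⁻ x in D, vertSq n F x ^ (2 : ℝ) ≤
      c⁻¹ * (2 * ∫⁻ y in U, conSq n F y ^ (2 : ℝ)) := by
    rw [← ENNReal.mul_le_iff_le_inv (measure_ball_pos _ _ one_pos).ne' measure_ball_lt_top.ne]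
    exact mul_setLIntegral_vertSq_rpow_two_le hF hD hD_dense
  calc volume {x | a < vertSq n F x}
      ≤ volume (toMeasurable volume A) + volume ({x | a < vertSq n F x} ∩ D) := by
        refine (measure_mono fun x hx ↦ ?_).trans (measure_union_le _ _)
        by_cases hxD : x ∈ D
        · exact Or.inr ⟨hx, hxD⟩
        · exact Or.inl (not_not.1 hxD)
    _ ≤ 2 * 4 ^ n * volume {y | a < conSq n F y} +
          (a ^ (2 : ℝ))⁻¹ * (c⁻¹ * (2 * ∫⁻ y in U, conSq n F y ^ (2 : ℝ))) := by
        gcongr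
        exact h_cheb.trans (by gcongr)
    _ = _ := by ring

end SquareFunctions

theorem stmt_2_general (n : ℕ) (p : ℝ) (hp : 0 < p) (hp2 : p ≤ 2) :
    ∃ C : ℝ≥0∞, C ≠ ⊤ ∧
      ∀ F : (Fin n → ℝ) → ℝ → ℂ, Measurable (Function.uncurry F) →
        (∫⁻ x, vertSq n F x ^ p) ^ (1 / p) ≤ C * (∫⁻ x, conSq n F x ^ p) ^ (1 / p) := by
  set c := volume (ball (0 : Fin n → ℝ) 1)
  have hc : c ≠ 0 := (measure_ball_pos _ _ one_pos).ne'
  rcases hp2.lt_or_eq with hp2 | rfl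
  · refine ⟨(2 * 4 ^ n + ENNReal.ofReal p * (2 * c⁻¹) * (ENNReal.ofReal (2 - p))⁻¹) ^ (1 / p),
      rpow_ne_top_of_nonneg (by positivity) ?_, fun F hF ↦ ?_⟩
    · have h_inv : (ENNReal.ofReal (2 - p))⁻¹ ≠ ∞ := inv_ne_top.2 (ofReal_pos.2 (by linarith)).ne'
      finiteness
    rw [← mul_rpow_of_nonneg _ _ (by positivity)]
    gcongr
    exact lintegral_rpow_le_of_good_lambda (measurable_vertSq hF) (measurable_conSq hF) hp hp2
      fun t ht ↦ volume_setOf_lt_vertSq_le hF (ofReal_pos.2 ht).ne' ofReal_ne_top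
  · refine ⟨c⁻¹ ^ (1 / 2 : ℝ), rpow_ne_top_of_nonneg (by norm_num) (inv_ne_top.2 hc),
      fun F hF ↦ ?_⟩
    rw [lintegral_conSq_rpow_two hF, ← mul_rpow_of_nonneg _ _ (by norm_num), ← mul_assoc,
      ENNReal.inv_mul_cancel hc measure_ball_lt_top.ne, one_mul]

/-- For `0 < p ≤ 2`, the vertical square function is dominated in `L^p` by the
conical square function. -/
theorem stmt_2 (n : ℕ) (hn : 0 < n) (p : ℝ) (hp : 0 < p) (hp2 : p ≤ 2) :
    ∃ C : ℝ≥0∞, C ≠ ⊤ ∧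
      ∀ F : (Fin n → ℝ) → ℝ → ℂ, Measurable (Function.uncurry F) →
        (∫⁻ x, vertSq n F x ^ p) ^ (1 / p) ≤ C * (∫⁻ x, conSq n F x ^ p) ^ (1 / p) :=
  stmt_2_general n p hp hp2
end

section
/- Let $F: \mathbb{R}^{n+1}_+ \to [0,\infty)$ be measurable, and for each cube $Q \subset \mathbb{R}^n$ define the local square function $A_{Q,F}(x) := \big( \iint_{|x-y|<t<\ell(Q)} |F(y,t)|^2 \, \frac{dy\,dt}{t^{n+1}} \big)^{1/2}$. Suppose there exists $C_0 > 0$ such that $\int_Q A_{Q,F}^2 \, dx \le C_0 |Q|$ for every cube $Q$. Then for every $p > 1$ there exists $C_1 = C_1(p, n, C_0)$ such that $\int_Q A_{Q,F}^p \, dx \le C_1 |Q|$ for every cube $Q$; moreover one may take $C_1 \lesssim_{p,n} C_0^{p/2}$. -/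
/-!
Slicing the cone `{|x - y| < t < ℓ}` at the heights `ℓ / 2 ^ k` bounds `A_{Q,F}(x)²` by a
dyadic sum `T(x) = ∑ₖ b(Pₖ(x))` over the dyadic subcubes `Pₖ(x) ∋ x` of `Q`, where `b(P)` is a
normalised integral of `F²` over the Whitney box (triple of `P`) × `(ℓ(P)/2, ℓ(P)]`. The Whitney
boxes of the dyadic subcubes of a cube `P` overlap at most `3ⁿ` times and lie in a Carleson box
over a dilate of `P`, so the `L²` hypothesis gives the packing bound `∫_P T_P ≤ Λ |P|`, with `T_P`
summing only over the subcubes of `P`. From `(∑ aₖ)^(m+1) ≤ (m+1) ∑_d a_d (∑_{k ≥ d} aₖ)^m`,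
integrated cube by cube, induction on `m` gives `∫_P T_P^m ≤ m! Λ^m |P|`; finally
`A^p ≤ 1 + T^m` for any integer `m ≥ p / 2`.
-/

open MeasureTheory Metric ENNReal

/-- The square `A_{Q,F}(x)^2` of the local square function associated to the cube
of center `c` and side length `ℓ` (cubes are sup-norm balls `ball c (ℓ/2)`). -/
noncomputable def localSqSq (n : ℕ) (F : (Fin n → ℝ) → ℝ → ℝ) (ℓ : ℝ) (x : Fin n → ℝ) : ℝ≥0∞ :=
  ∫⁻ p in {p : (Fin n → ℝ) × ℝ | dist x p.1 < p.2 ∧ p.2 < ℓ},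
    ENNReal.ofReal (F p.1 p.2 ^ 2 / p.2 ^ (n + 1))

namespace ENNReal

lemma add_pow_succ_le (y a : ℝ≥0∞) (m : ℕ) :
    (y + a) ^ (m + 1) ≤ y ^ (m + 1) + (m + 1) * a * (y + a) ^ m := by
  have h := geom_sum₂_mul_add a y (m + 1)
  rw [add_comm a y] at h
  rw [← h, add_comm _ (y ^ (m + 1))]
  gcongr y ^ (m + 1) + ?_
  rw [Nat.add_sub_cancel]
  calc (∑ i ∈ Finset.range (m + 1), (y + a) ^ i * y ^ (m - i)) * a
      ≤ (∑ _i ∈ Finset.range (m + 1), (y + a) ^ m) * a := by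
        gcongr with i hi
        calc (y + a) ^ i * y ^ (m - i) ≤ (y + a) ^ i * (y + a) ^ (m - i) := by
              gcongr; exact le_self_add
          _ = (y + a) ^ m := by
              rw [← pow_add, Nat.add_sub_cancel' (Nat.lt_succ_iff.1 (Finset.mem_range.1 hi))]
    _ = (m + 1) * a * (y + a) ^ m := by
        rw [Finset.sum_const, Finset.card_range, nsmul_eq_mul]
        push_cast
        ring

lemma tsum_pow_succ_le_tail_add_sum (b : ℕ → ℝ≥0∞) (m D : ℕ) :
    (∑' k, b k) ^ (m + 1) ≤
      (∑' k, b (k + D)) ^ (m + 1) +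
        (m + 1) * ∑ d ∈ Finset.range D, b d * (∑' k, b (k + d)) ^ m := by
  induction D with
  | zero => simp
  | succ D ih =>
    have htail : ∑' k, b (k + D) = ∑' k, b (k + (D + 1)) + b D := by
      rw [tsum_eq_zero_add' ENNReal.summable, zero_add, add_comm]
      exact congrArg₂ _ (tsum_congr fun k => congrArg b (by omega)) rfl
    have hstep : (∑' k, b (k + D)) ^ (m + 1) ≤
        (∑' k, b (k + (D + 1))) ^ (m + 1) + (m + 1) * (b D * (∑' k, b (k + D)) ^ m) := by
      rw [htail, ← mul_assoc]
      exact add_pow_succ_le _ _ m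
    calc (∑' k, b k) ^ (m + 1)
        ≤ (∑' k, b (k + D)) ^ (m + 1) +
            (m + 1) * ∑ d ∈ Finset.range D, b d * (∑' k, b (k + d)) ^ m := ih
      _ ≤ (∑' k, b (k + (D + 1))) ^ (m + 1) + (m + 1) * (b D * (∑' k, b (k + D)) ^ m) +
            (m + 1) * ∑ d ∈ Finset.range D, b d * (∑' k, b (k + d)) ^ m := by gcongr
      _ = _ := by rw [Finset.sum_range_succ]; ring

lemma tsum_pow_succ_le (a : ℕ → ℝ≥0∞) (m : ℕ) :
    (∑' k, a k) ^ (m + 1) ≤ (m + 1) * ∑' d, a d * (∑' k, a (k + d)) ^ m := by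
  refine le_of_tendsto' (((ENNReal.continuous_pow (m + 1)).tendsto _).comp
    (ENNReal.tendsto_nat_tsum a)) fun N => ?_
  -- truncating `a` at `N` makes the tail at `N` vanish
  set b : ℕ → ℝ≥0∞ := fun k => if k < N then a k else 0
  have hba : b ≤ a := fun k => by dsimp only [b]; split_ifs <;> simp
  have hsum : ∑' k, b k = ∑ k ∈ Finset.range N, a k := by
    rw [tsum_eq_sum (s := Finset.range N) fun k hk => if_neg (by simpa using hk)]
    exact Finset.sum_congr rfl fun k hk => if_pos (Finset.mem_range.1 hk)
  have htail : ∑' k, b (k + N) = 0 := by simp [b]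
  have := tsum_pow_succ_le_tail_add_sum b m N
  rw [hsum, htail, zero_pow (Nat.succ_ne_zero m), zero_add] at this
  refine this.trans ?_
  gcongr (m + 1) * ?_
  refine (Finset.sum_le_sum fun d _ => ?_).trans (ENNReal.sum_le_tsum _)
  gcongr
  · exact hba d
  · exact hba _

lemma rpow_le_one_add_pow (x : ℝ≥0∞) {q : ℝ} (hq : 0 ≤ q) {m : ℕ} (hm : q ≤ m) :
    x ^ q ≤ 1 + x ^ m := by
  rcases le_or_gt x 1 with hx | hx
  · exact le_add_right (ENNReal.rpow_le_one hx hq)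
  · calc x ^ q ≤ x ^ (m : ℝ) := ENNReal.rpow_le_rpow_of_exponent_le hx.le hm
      _ = x ^ m := ENNReal.rpow_natCast x m
      _ ≤ 1 + x ^ m := le_add_self

end ENNReal

lemma lintegral_eq_tsum_setLIntegral_fiber {X ι : Type*} [MeasurableSpace X] [Countable ι]
    [MeasurableSpace ι] [MeasurableSingletonClass ι] {φ : X → ι} (hφ : Measurable φ)
    (μ : Measure X) (f : X → ℝ≥0∞) :
    ∫⁻ x, f x ∂μ = ∑' i, ∫⁻ x in φ ⁻¹' {i}, f x ∂μ := by
  rw [← lintegral_iUnion (fun i => hφ (measurableSet_singleton i)) (pairwise_disjoint_fiber φ),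
    ← Set.preimage_iUnion, Set.iUnion_of_singleton, Set.preimage_univ, Measure.restrict_univ]

lemma setLIntegral_fiber_comp_mul {X ι : Type*} [MeasurableSpace X] [MeasurableSpace ι]
    [MeasurableSingletonClass ι] {φ : X → ι} (hφ : Measurable φ) (ν : Measure X)
    (c : ι → ℝ≥0∞) {G : X → ℝ≥0∞} (hG : Measurable G) (i : ι) :
    ∫⁻ x in φ ⁻¹' {i}, c (φ x) * G x ∂ν = c i * ∫⁻ x in φ ⁻¹' {i}, G x ∂ν := by
  rw [← lintegral_const_mul _ hG]
  exact setLIntegral_congr_fun (hφ (measurableSet_singleton i)) fun x hx => by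
    rw [show φ x = i from hx]

lemma setLIntegral_fiber_comp {X ι : Type*} [MeasurableSpace X] [MeasurableSpace ι]
    [MeasurableSingletonClass ι] {φ : X → ι} (hφ : Measurable φ) (ν : Measure X)
    (c : ι → ℝ≥0∞) (i : ι) :
    ∫⁻ x in φ ⁻¹' {i}, c (φ x) ∂ν = c i * ν (φ ⁻¹' {i}) := by
  simpa using setLIntegral_fiber_comp_mul hφ ν c measurable_const i (G := fun _ => 1)

lemma lintegral_comp_mul_le_of_fiber {X ι : Type*} [MeasurableSpace X] [Countable ι]
    [MeasurableSpace ι] [MeasurableSingletonClass ι] {φ : X → ι} (hφ : Measurable φ)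
    {ν : Measure X} (c : ι → ℝ≥0∞) {G : X → ℝ≥0∞} (hG : Measurable G) {M : ℝ≥0∞}
    (hGM : ∀ i, ∫⁻ x in φ ⁻¹' {i}, G x ∂ν ≤ M * ν (φ ⁻¹' {i})) :
    ∫⁻ x, c (φ x) * G x ∂ν ≤ M * ∫⁻ x, c (φ x) ∂ν := by
  rw [lintegral_eq_tsum_setLIntegral_fiber hφ, lintegral_eq_tsum_setLIntegral_fiber hφ,
    ← ENNReal.tsum_mul_left]
  refine ENNReal.tsum_le_tsum fun i => ?_
  rw [setLIntegral_fiber_comp_mul hφ ν c hG, setLIntegral_fiber_comp hφ]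
  calc c i * ∫⁻ x in φ ⁻¹' {i}, G x ∂ν ≤ c i * (M * ν (φ ⁻¹' {i})) := by gcongr; exact hGM i
    _ = M * (c i * ν (φ ⁻¹' {i})) := by ring

lemma exists_mem_Ioc_div_two_pow {ℓ t : ℝ} (ht : 0 < t) (htℓ : t ≤ ℓ) :
    ∃ k : ℕ, t ∈ Set.Ioc (ℓ / 2 ^ (k + 1)) (ℓ / 2 ^ k) := by
  obtain ⟨k, hk₁, hk₂⟩ := exists_nat_pow_near ((one_le_div ht).2 htℓ) one_lt_two
  rw [le_div_iff₀ ht] at hk₁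
  rw [div_lt_iff₀ ht] at hk₂
  exact ⟨k, (div_lt_iff₀ (by positivity)).2 (by linarith),
    (le_div_iff₀ (by positivity)).2 (by linarith)⟩

lemma pairwise_disjoint_Ioc_div_two_pow {ℓ : ℝ} (hℓ : 0 ≤ ℓ) :
    Pairwise (Function.onFun Disjoint fun k : ℕ => Set.Ioc (ℓ / 2 ^ (k + 1)) (ℓ / 2 ^ k)) := by
  have hanti : Antitone fun k : ℕ => ℓ / 2 ^ k := fun i j hij =>
    div_le_div_of_nonneg_left hℓ (by positivity) (pow_le_pow_right₀ one_le_two hij)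
  simpa only [Order.succ_eq_add_one] using hanti.pairwise_disjoint_on_Ioc_succ

section DyadicGrid

variable {n : ℕ} (a : Fin n → ℝ) (ℓ : ℝ)

noncomputable def dyadicIndex (k : ℕ) (x : Fin n → ℝ) : Fin n → ℤ :=
  fun i => ⌊(x i - a i) / (ℓ / 2 ^ k)⌋

def dyadicCube (k : ℕ) (j : Fin n → ℤ) : Set (Fin n → ℝ) :=
  dyadicIndex a ℓ k ⁻¹' {j}

def dyadicTripleCube (k : ℕ) (j : Fin n → ℤ) : Set (Fin n → ℝ) :=
  ⋃ o : Fin n → Fin 3, dyadicCube a ℓ k fun i => j i + o i - 1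

variable {a ℓ}

lemma mem_dyadicCube_iff (hℓ : 0 < ℓ) {k : ℕ} {j : Fin n → ℤ} {x : Fin n → ℝ} :
    x ∈ dyadicCube a ℓ k j ↔
      ∀ i, a i + j i * (ℓ / 2 ^ k) ≤ x i ∧ x i < a i + (j i + 1) * (ℓ / 2 ^ k) := by
  have hs : 0 < ℓ / 2 ^ k := by positivity
  simp only [dyadicCube, Set.mem_preimage, Set.mem_singleton_iff, funext_iff, dyadicIndex,
    Int.floor_eq_iff, le_div_iff₀ hs, div_lt_iff₀ hs]
  exact forall_congr' fun i => and_congr (by constructor <;> intro h <;> linarith)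
    (by constructor <;> intro h <;> linarith)

lemma mem_dyadicCube_dyadicIndex (k : ℕ) (x : Fin n → ℝ) :
    x ∈ dyadicCube a ℓ k (dyadicIndex a ℓ k x) := rfl

lemma dyadicCube_nonempty (hℓ : 0 < ℓ) (k : ℕ) (j : Fin n → ℤ) :
    (dyadicCube a ℓ k j).Nonempty :=
  ⟨fun i => a i + j i * (ℓ / 2 ^ k), (mem_dyadicCube_iff hℓ).2 fun _ =>
    ⟨le_rfl, by linarith [show 0 < ℓ / 2 ^ k by positivity]⟩⟩

lemma measurable_dyadicIndex (k : ℕ) : Measurable (dyadicIndex a ℓ k) :=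
  measurable_pi_lambda _ fun i =>
    (((measurable_pi_apply i).sub_const _).div_const _).floor

lemma measurableSet_dyadicCube (k : ℕ) (j : Fin n → ℤ) : MeasurableSet (dyadicCube a ℓ k j) :=
  measurable_dyadicIndex k (measurableSet_singleton j)

lemma volume_dyadicCube (hℓ : 0 < ℓ) (k : ℕ) (j : Fin n → ℤ) :
    volume (dyadicCube a ℓ k j) = ENNReal.ofReal (ℓ / 2 ^ k) ^ n := by
  have : dyadicCube a ℓ k j = Set.univ.pi fun i =>
      Set.Ico (a i + j i * (ℓ / 2 ^ k)) (a i + (j i + 1) * (ℓ / 2 ^ k)) := by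
    ext x
    simp [mem_dyadicCube_iff hℓ]
  rw [this, volume_pi_pi]
  simp only [Real.volume_Ico, add_sub_add_left_eq_sub, ← sub_mul, add_sub_cancel_left, one_mul,
    Finset.prod_const, Finset.card_univ, Fintype.card_fin]

lemma dyadicIndex_eq_ediv_two_pow (K d : ℕ) (x : Fin n → ℝ) :
    dyadicIndex a ℓ K x = fun i => dyadicIndex a ℓ (K + d) x i / (2 ^ d : ℕ) := by
  funext i
  rw [dyadicIndex, dyadicIndex, ← Int.floor_div_natCast]
  congr 1
  push_cast
  rw [pow_add]
  rcases eq_or_ne ℓ 0 with rfl | hℓ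
  · simp
  · field_simp

lemma dyadicCube_subset_of_mem {K k : ℕ} (hK : K ≤ k) {j₀ j : Fin n → ℤ} {x : Fin n → ℝ}
    (hx₀ : x ∈ dyadicCube a ℓ K j₀) (hx : x ∈ dyadicCube a ℓ k j) :
    dyadicCube a ℓ k j ⊆ dyadicCube a ℓ K j₀ := by
  obtain ⟨d, rfl⟩ := Nat.exists_eq_add_of_le hK
  intro y hy
  simp only [dyadicCube, Set.mem_preimage, Set.mem_singleton_iff] at hx₀ hx hy ⊢
  rw [dyadicIndex_eq_ediv_two_pow K d, hy, ← hx, ← dyadicIndex_eq_ediv_two_pow, hx₀]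

lemma mem_dyadicTripleCube_of_dist_lt (hℓ : 0 < ℓ) {k : ℕ} {j : Fin n → ℤ} {x y : Fin n → ℝ}
    (hx : x ∈ dyadicCube a ℓ k j) (hxy : dist x y < ℓ / 2 ^ k) :
    y ∈ dyadicTripleCube a ℓ k j := by
  have hs : 0 < ℓ / 2 ^ k := by positivity
  have hnear : ∀ i, |dyadicIndex a ℓ k y i - j i| ≤ 1 := by
    intro i
    have hxi := (mem_dyadicCube_iff hℓ).1 hx i
    have hxyi := abs_lt.1 ((dist_pi_lt_iff hs).1 hxy i)
    have hy := mem_dyadicCube_iff hℓ |>.1 (mem_dyadicCube_dyadicIndex (a := a) k y) i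
    have h1 : ((dyadicIndex a ℓ k y i : ℤ) : ℝ) < j i + 2 := by nlinarith [hxyi.1, hy.1, hxi.2]
    have h2 : (j i : ℝ) - 2 < (dyadicIndex a ℓ k y i : ℤ) := by nlinarith [hxyi.2, hy.2, hxi.1]
    have h1' : dyadicIndex a ℓ k y i < j i + 2 := by exact_mod_cast h1
    have h2' : j i - 2 < dyadicIndex a ℓ k y i := by exact_mod_cast h2
    rw [abs_le]
    omega
  refine Set.mem_iUnion.2 ⟨fun i => ⟨(dyadicIndex a ℓ k y i - j i + 1).toNat, ?_⟩, ?_⟩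
  · have := abs_le.1 (hnear i)
    omega
  · show dyadicIndex a ℓ k y = _
    funext i
    have := abs_le.1 (hnear i)
    simp only
    omega

lemma dyadicTripleCube_subset_ball (hℓ : 0 < ℓ) {K k : ℕ} (hK : K ≤ k) {j₀ j : Fin n → ℤ}
    {x z : Fin n → ℝ} (hz : z ∈ dyadicCube a ℓ K j₀) (hx₀ : x ∈ dyadicCube a ℓ K j₀)
    (hx : x ∈ dyadicCube a ℓ k j) :
    dyadicTripleCube a ℓ k j ⊆ ball z (3 * (ℓ / 2 ^ K)) := by
  have hsk : ℓ / 2 ^ k ≤ ℓ / 2 ^ K :=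
    div_le_div_of_nonneg_left hℓ.le (by positivity) (pow_le_pow_right₀ one_le_two hK)
  intro y hy
  obtain ⟨o, hyo⟩ := Set.mem_iUnion.1 hy
  rw [mem_ball, dist_pi_lt_iff (by positivity)]
  intro i
  have hyi := (mem_dyadicCube_iff hℓ).1 hyo i
  have hxi := (mem_dyadicCube_iff hℓ).1 hx i
  have hx₀i := (mem_dyadicCube_iff hℓ).1 hx₀ i
  have hzi := (mem_dyadicCube_iff hℓ).1 hz i
  have ho : ((o i : ℕ) : ℝ) ≤ 2 := by exact_mod_cast Nat.lt_succ_iff.1 (o i).isLt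
  push_cast at hyi
  rw [Real.dist_eq, abs_lt]
  constructor <;> nlinarith [(o i : ℕ).cast_nonneg (α := ℝ)]

lemma measurable_comp_dyadicIndex (c : (Fin n → ℤ) → ℝ≥0∞) (k : ℕ) :
    Measurable fun x => c (dyadicIndex a ℓ k x) :=
  (measurable_of_countable c).comp (measurable_dyadicIndex k)

lemma measurableSet_dyadicTripleCube (k : ℕ) (j : Fin n → ℤ) :
    MeasurableSet (dyadicTripleCube a ℓ k j) :=
  MeasurableSet.iUnion fun _ => measurableSet_dyadicCube k _

lemma tsum_setLIntegral_preimage_dyadicTripleCube_le {X : Type*} [MeasurableSpace X]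
    {π : X → (Fin n → ℝ)} (hπ : Measurable π) (μ : Measure X) (g : X → ℝ≥0∞) (k : ℕ) :
    ∑' j, ∫⁻ x in π ⁻¹' dyadicTripleCube a ℓ k j, g x ∂μ ≤ 3 ^ n * ∫⁻ x, g x ∂μ := by
  have hφ : Measurable (dyadicIndex a ℓ k ∘ π) := (measurable_dyadicIndex k).comp hπ
  have hshift : ∀ o : Fin n → Fin 3,
      Function.Injective fun j : Fin n → ℤ => fun i => j i + o i - 1 :=
    fun o j j' h => funext fun i => by simpa using congrFun h i
  calc ∑' j, ∫⁻ x in π ⁻¹' dyadicTripleCube a ℓ k j, g x ∂μ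
      ≤ ∑' (j : Fin n → ℤ) (o : Fin n → Fin 3),
          ∫⁻ x in (dyadicIndex a ℓ k ∘ π) ⁻¹' {fun i => j i + o i - 1}, g x ∂μ := by
        refine ENNReal.tsum_le_tsum fun j => ?_
        rw [dyadicTripleCube, Set.preimage_iUnion]
        exact lintegral_iUnion_le _ _
    _ = ∑' (o : Fin n → Fin 3) (j : Fin n → ℤ),
          ∫⁻ x in (dyadicIndex a ℓ k ∘ π) ⁻¹' {fun i => j i + o i - 1}, g x ∂μ :=
        ENNReal.tsum_comm
    _ ≤ ∑' _o : Fin n → Fin 3, ∫⁻ x, g x ∂μ := by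
        refine ENNReal.tsum_le_tsum fun o => ?_
        rw [lintegral_eq_tsum_setLIntegral_fiber hφ]
        exact ENNReal.tsum_comp_le_tsum_of_injective (hshift o) _
    _ = 3 ^ n * ∫⁻ x, g x ∂μ := by simp

lemma setLIntegral_dyadicCube_restrict_le {K k : ℕ} (hK : K ≤ k) {G : (Fin n → ℝ) → ℝ≥0∞}
    {M : ℝ≥0∞} (hGM : ∀ j, ∫⁻ x in dyadicCube a ℓ k j, G x ≤ M * volume (dyadicCube a ℓ k j))
    (j₀ j : Fin n → ℤ) :
    ∫⁻ x in dyadicCube a ℓ k j, G x ∂(volume.restrict (dyadicCube a ℓ K j₀)) ≤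
      M * volume.restrict (dyadicCube a ℓ K j₀) (dyadicCube a ℓ k j) := by
  rw [Measure.restrict_restrict (measurableSet_dyadicCube k j),
    Measure.restrict_apply (measurableSet_dyadicCube k j)]
  rcases (dyadicCube a ℓ k j ∩ dyadicCube a ℓ K j₀).eq_empty_or_nonempty with h | ⟨x, hxk, hxK⟩
  · simp [h]
  · rw [Set.inter_eq_left.2 (dyadicCube_subset_of_mem hK hxK hxk)]
    exact hGM j

end DyadicGrid

section CarlesonSum

variable {n : ℕ} {a : Fin n → ℝ} {ℓ : ℝ}

variable (a ℓ) in
noncomputable def dyadicSum (b : ℕ → (Fin n → ℤ) → ℝ≥0∞) (K : ℕ) (x : Fin n → ℝ) : ℝ≥0∞ :=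
  ∑' d, b (K + d) (dyadicIndex a ℓ (K + d) x)

lemma measurable_dyadicSum (b : ℕ → (Fin n → ℤ) → ℝ≥0∞) (K : ℕ) :
    Measurable (dyadicSum a ℓ b K) :=
  Measurable.tsum fun d => measurable_comp_dyadicIndex (b (K + d)) (K + d)

theorem setLIntegral_dyadicSum_pow_le {b : ℕ → (Fin n → ℤ) → ℝ≥0∞} {Λ : ℝ≥0∞}
    (hpack : ∀ K j, ∫⁻ x in dyadicCube a ℓ K j, dyadicSum a ℓ b K x ≤
      Λ * volume (dyadicCube a ℓ K j)) (m K : ℕ) (j₀ : Fin n → ℤ) :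
    ∫⁻ x in dyadicCube a ℓ K j₀, dyadicSum a ℓ b K x ^ m ≤
      m.factorial * Λ ^ m * volume (dyadicCube a ℓ K j₀) := by
  induction m generalizing K j₀ with
  | zero => simp
  | succ m ih =>
    set P₀ := dyadicCube a ℓ K j₀
    set c : ℕ → (Fin n → ℝ) → ℝ≥0∞ := fun d x => b (K + d) (dyadicIndex a ℓ (K + d) x)
    have hc : ∀ d, Measurable (c d) := fun d => measurable_comp_dyadicIndex _ _
    have hmeas : ∀ d, Measurable fun x => c d x * dyadicSum a ℓ b (K + d) x ^ m := fun d =>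
      (hc d).mul ((measurable_dyadicSum b _).pow_const m)
    have hpt : ∀ x, dyadicSum a ℓ b K x ^ (m + 1) ≤
        (m + 1) * ∑' d, c d x * dyadicSum a ℓ b (K + d) x ^ m := fun x => by
      have htail : ∀ d, dyadicSum a ℓ b (K + d) x = ∑' k, c (k + d) x := fun d =>
        tsum_congr fun k => by simp only [c, add_assoc, add_comm d k]
      refine (ENNReal.tsum_pow_succ_le (fun d => c d x) m).trans_eq ?_
      simp_rw [htail]
    have hfiber : ∀ d, ∫⁻ x in P₀, c d x * dyadicSum a ℓ b (K + d) x ^ m ≤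
        m.factorial * Λ ^ m * ∫⁻ x in P₀, c d x :=
      fun d => lintegral_comp_mul_le_of_fiber (measurable_dyadicIndex _) _
        ((measurable_dyadicSum b _).pow_const m)
        (setLIntegral_dyadicCube_restrict_le (Nat.le_add_right K d) (ih (K + d)) j₀)
    calc ∫⁻ x in P₀, dyadicSum a ℓ b K x ^ (m + 1)
        ≤ ∫⁻ x in P₀, (m + 1) * ∑' d, c d x * dyadicSum a ℓ b (K + d) x ^ m :=
          lintegral_mono hpt
      _ = (m + 1) * ∑' d, ∫⁻ x in P₀, c d x * dyadicSum a ℓ b (K + d) x ^ m := by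
          rw [lintegral_const_mul _ (Measurable.tsum hmeas),
            lintegral_tsum fun d => (hmeas d).aemeasurable]
      _ ≤ (m + 1) * ∑' d, m.factorial * Λ ^ m * ∫⁻ x in P₀, c d x := by
          gcongr with d
          exact hfiber d
      _ = (m + 1) * (m.factorial * Λ ^ m) * ∫⁻ x in P₀, dyadicSum a ℓ b K x := by
          rw [ENNReal.tsum_mul_left, ← lintegral_tsum fun d => (hc d).aemeasurable, ← mul_assoc]
          rfl
      _ ≤ (m + 1) * (m.factorial * Λ ^ m) * (Λ * volume P₀) := by gcongr; exact hpack K j₀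
      _ = (m + 1).factorial * Λ ^ (m + 1) * volume P₀ := by
          rw [Nat.factorial_succ]; push_cast; ring

end CarlesonSum

section SquareFunction

variable {n : ℕ} {F : (Fin n → ℝ) → ℝ → ℝ} {a : Fin n → ℝ} {ℓ : ℝ}

variable (F a ℓ) in
/-- On the Whitney box `t⁻¹ ^ (n + 1) ≤ (ℓ / 2 ^ (k + 1))⁻¹ ^ (n + 1)`, so `whitneyCoeff F a ℓ k j`
dominates the part of `A²` coming from that box at every point of the cube. -/
noncomputable def whitneyCoeff (k : ℕ) (j : Fin n → ℤ) : ℝ≥0∞ :=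
  ∫⁻ p in dyadicTripleCube a ℓ k j ×ˢ Set.Ioc (ℓ / 2 ^ (k + 1)) (ℓ / 2 ^ k),
    ENNReal.ofReal (F p.1 p.2 ^ 2 / (ℓ / 2 ^ (k + 1)) ^ (n + 1))

lemma localSqSq_le_dyadicSum (hℓ : 0 < ℓ) (x : Fin n → ℝ) :
    localSqSq n F ℓ x ≤ dyadicSum a ℓ (whitneyCoeff F a ℓ) 0 x := by
  set S : ℕ → Set ((Fin n → ℝ) × ℝ) := fun k =>
    {p | dist x p.1 < p.2} ∩ Prod.snd ⁻¹' Set.Ioc (ℓ / 2 ^ (k + 1)) (ℓ / 2 ^ k)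
  have hcover : {p : (Fin n → ℝ) × ℝ | dist x p.1 < p.2 ∧ p.2 < ℓ} ⊆ ⋃ k, S k := by
    rintro ⟨y, t⟩ ⟨hd, htℓ⟩
    obtain ⟨k, hk⟩ := exists_mem_Ioc_div_two_pow (dist_nonneg.trans_lt hd) htℓ.le
    exact Set.mem_iUnion.2 ⟨k, hd, hk⟩
  have hslab : ∀ k, ∫⁻ p in S k, ENNReal.ofReal (F p.1 p.2 ^ 2 / p.2 ^ (n + 1)) ≤
      whitneyCoeff F a ℓ k (dyadicIndex a ℓ k x) := by
    intro k
    have hs : 0 < ℓ / 2 ^ (k + 1) := by positivity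
    have hS : MeasurableSet (S k) :=
      (measurableSet_lt (measurable_const.dist measurable_fst) measurable_snd).inter
        (measurable_snd measurableSet_Ioc)
    refine (setLIntegral_mono' hS fun p hp => ?_).trans (lintegral_mono_set ?_)
    · exact ENNReal.ofReal_le_ofReal (div_le_div_of_nonneg_left (sq_nonneg _) (by positivity)
        (pow_le_pow_left₀ hs.le hp.2.1.le _))
    · rintro ⟨y, t⟩ ⟨hd, ht⟩
      exact ⟨mem_dyadicTripleCube_of_dist_lt hℓ (mem_dyadicCube_dyadicIndex k x)
        (hd.trans_le ht.2), ht⟩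
  calc localSqSq n F ℓ x
      ≤ ∫⁻ p in ⋃ k, S k, ENNReal.ofReal (F p.1 p.2 ^ 2 / p.2 ^ (n + 1)) :=
        lintegral_mono_set hcover
    _ ≤ ∑' k, ∫⁻ p in S k, ENNReal.ofReal (F p.1 p.2 ^ 2 / p.2 ^ (n + 1)) :=
        lintegral_iUnion_le _ _
    _ ≤ dyadicSum a ℓ (whitneyCoeff F a ℓ) 0 x :=
        ENNReal.tsum_le_tsum fun k => by simpa only [zero_add] using hslab k

lemma whitneyCoeff_mul_volume_le (hℓ : 0 < ℓ) (k : ℕ) (j : Fin n → ℤ) :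
    whitneyCoeff F a ℓ k j * volume (dyadicCube a ℓ k j) ≤
      2 ^ (n + 1) * ∫⁻ p in dyadicTripleCube a ℓ k j ×ˢ Set.Ioc (ℓ / 2 ^ (k + 1)) (ℓ / 2 ^ k),
        ENNReal.ofReal (F p.1 p.2 ^ 2 / p.2) := by
  have hs : 0 < ℓ / 2 ^ (k + 1) := by positivity
  have hsk : ℓ / 2 ^ k = 2 * (ℓ / 2 ^ (k + 1)) := by rw [pow_succ]; field_simp
  rw [whitneyCoeff, volume_dyadicCube hℓ, ← lintegral_mul_const' _ _ (pow_ne_top ofReal_ne_top),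
    ← lintegral_const_mul' _ _ (pow_ne_top ofNat_ne_top)]
  refine setLIntegral_mono' ((measurableSet_dyadicTripleCube k j).prod measurableSet_Ioc)
    fun p hp => ?_
  obtain ⟨ht₁, ht₂⟩ := hp.2
  have ht : 0 < p.2 := hs.trans ht₁
  rw [← ofReal_pow (by positivity), ← ofReal_mul (by positivity),
    ← ofReal_ofNat 2, ← ofReal_pow zero_le_two, ← ofReal_mul (by positivity)]
  refine ofReal_le_ofReal ?_
  rw [hsk] at ht₂ ⊢
  set s := ℓ / 2 ^ (k + 1)
  calc F p.1 p.2 ^ 2 / s ^ (n + 1) * (2 * s) ^ n = 2 ^ (n + 1) * (F p.1 p.2 ^ 2 / (2 * s)) := by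
        rw [mul_pow, pow_succ, pow_succ]
        field_simp
        ring
    _ ≤ 2 ^ (n + 1) * (F p.1 p.2 ^ 2 / p.2) := by gcongr

lemma setLIntegral_ball_prod_Ioc_le (hF : Measurable (Function.uncurry F)) {C₀ : ℝ}
    (hyp : ∀ (c : Fin n → ℝ) (ℓ : ℝ), 0 < ℓ →
      ∫⁻ x in ball c (ℓ / 2), localSqSq n F ℓ x ≤ ENNReal.ofReal (C₀ * ℓ ^ n))
    (z : Fin n → ℝ) {r : ℝ} (hr : 0 < r) :
    ∫⁻ p in ball z r ×ˢ Set.Ioc 0 r, ENNReal.ofReal (F p.1 p.2 ^ 2 / p.2) ≤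
      ENNReal.ofReal (C₀ * (4 * r) ^ n) := by
  set f : (Fin n → ℝ) × ℝ → ℝ≥0∞ := fun p => ENNReal.ofReal (F p.1 p.2 ^ 2 / p.2 ^ (n + 1))
  have hf : Measurable f := ((hF.pow_const 2).div (measurable_snd.pow_const _)).ennreal_ofReal
  set G : (Fin n → ℝ) → (Fin n → ℝ) × ℝ → ℝ≥0∞ := fun x => {p | dist x p.1 < p.2}.indicator f
  have hG : Measurable (Function.uncurry G) :=
    (hf.comp measurable_snd).indicator (measurableSet_lt
      (measurable_fst.dist (measurable_fst.comp measurable_snd))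
      (measurable_snd.comp measurable_snd))
  set R := ball z r ×ˢ Set.Ioc 0 r
  -- `(y, t) ∈ R` lies in the cone of every `x ∈ ball y t ⊆ ball z (2 r)`, a set of measure `(2t)ⁿ`
  have hlower : ∀ p ∈ R, ENNReal.ofReal (F p.1 p.2 ^ 2 / p.2) ≤
      ∫⁻ x in ball z (4 * r / 2), G x p := by
    rintro ⟨y, t⟩ ⟨hy, ht₀, htr⟩
    calc ENNReal.ofReal (F y t ^ 2 / t) ≤ f (y, t) * volume (ball y t) := by
          rw [Real.volume_pi_ball y ht₀, Fintype.card_fin, ← ofReal_mul (by positivity)]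
          refine ofReal_le_ofReal ?_
          calc F y t ^ 2 / t ≤ 2 ^ n * (F y t ^ 2 / t) :=
                le_mul_of_one_le_left (by positivity) (one_le_pow₀ one_le_two)
            _ = F y t ^ 2 / t ^ (n + 1) * (2 * t) ^ n := by
                rw [mul_pow, pow_succ]
                field_simp
                ring
      _ = ∫⁻ x in ball y t, G x (y, t) := by
          rw [← setLIntegral_const]
          exact setLIntegral_congr_fun measurableSet_ball fun x hx =>
            (Set.indicator_of_mem (show (y, t) ∈ {p : (Fin n → ℝ) × ℝ | dist x p.1 < p.2} from hx)
              f).symm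
      _ ≤ ∫⁻ x in ball z (4 * r / 2), G x (y, t) :=
          lintegral_mono_set (ball_subset_ball' (by rw [mem_ball] at hy; linarith))
  have hupper : ∀ x, ∫⁻ p in R, G x p ≤ localSqSq n F (4 * r) x := fun x => by
    rw [setLIntegral_indicator (measurableSet_lt (measurable_const.dist measurable_fst)
      measurable_snd)]
    exact lintegral_mono_set fun p hp => ⟨hp.1, hp.2.2.2.trans_lt (by linarith)⟩
  calc ∫⁻ p in R, ENNReal.ofReal (F p.1 p.2 ^ 2 / p.2)
      ≤ ∫⁻ p in R, ∫⁻ x in ball z (4 * r / 2), G x p :=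
        setLIntegral_mono' (measurableSet_ball.prod measurableSet_Ioc) hlower
    _ = ∫⁻ x in ball z (4 * r / 2), ∫⁻ p in R, G x p :=
        (lintegral_lintegral_swap hG.aemeasurable).symm
    _ ≤ ∫⁻ x in ball z (4 * r / 2), localSqSq n F (4 * r) x := lintegral_mono hupper
    _ ≤ ENNReal.ofReal (C₀ * (4 * r) ^ n) := hyp z (4 * r) (by positivity)

lemma setLIntegral_whitneyCoeff_le (hℓ : 0 < ℓ) {K k : ℕ} (hK : K ≤ k) {j₀ : Fin n → ℤ}
    {z : Fin n → ℝ} (hz : z ∈ dyadicCube a ℓ K j₀) :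
    ∫⁻ x in dyadicCube a ℓ K j₀, whitneyCoeff F a ℓ k (dyadicIndex a ℓ k x) ≤
      2 ^ (n + 1) * 3 ^ n * ∫⁻ p in ball z (3 * (ℓ / 2 ^ K)) ×ˢ
        Set.Ioc (ℓ / 2 ^ (k + 1)) (ℓ / 2 ^ k), ENNReal.ofReal (F p.1 p.2 ^ 2 / p.2) := by
  set B := ball z (3 * (ℓ / 2 ^ K))
  set I := Set.Ioc (ℓ / 2 ^ (k + 1)) (ℓ / 2 ^ k)
  set g : (Fin n → ℝ) × ℝ → ℝ≥0∞ := fun p => ENNReal.ofReal (F p.1 p.2 ^ 2 / p.2)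
  have hterm : ∀ j, whitneyCoeff F a ℓ k j * volume.restrict (dyadicCube a ℓ K j₀)
      (dyadicCube a ℓ k j) ≤ 2 ^ (n + 1) *
        ∫⁻ p in Prod.fst ⁻¹' dyadicTripleCube a ℓ k j, g p ∂(volume.restrict (B ×ˢ I)) := by
    intro j
    rw [Measure.restrict_apply (measurableSet_dyadicCube k j),
      Measure.restrict_restrict (measurable_fst (measurableSet_dyadicTripleCube k j))]
    rcases (dyadicCube a ℓ k j ∩ dyadicCube a ℓ K j₀).eq_empty_or_nonempty with h | ⟨x, hxk, hxK⟩
    · rw [h, measure_empty, mul_zero]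
      exact bot_le
    · rw [Set.inter_eq_left.2 (dyadicCube_subset_of_mem hK hxK hxk), ← Set.prod_univ,
        Set.prod_inter_prod, Set.univ_inter, Set.inter_eq_left.2
          (dyadicTripleCube_subset_ball hℓ hK hz hxK hxk)]
      exact whitneyCoeff_mul_volume_le hℓ k j
  rw [lintegral_eq_tsum_setLIntegral_fiber (measurable_dyadicIndex k)]
  calc ∑' j, ∫⁻ x in dyadicIndex a ℓ k ⁻¹' {j}, whitneyCoeff F a ℓ k (dyadicIndex a ℓ k x)
        ∂(volume.restrict (dyadicCube a ℓ K j₀))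
      ≤ ∑' j, 2 ^ (n + 1) *
          ∫⁻ p in Prod.fst ⁻¹' dyadicTripleCube a ℓ k j, g p ∂(volume.restrict (B ×ˢ I)) :=
        ENNReal.tsum_le_tsum fun j =>
          (setLIntegral_fiber_comp (measurable_dyadicIndex k) _ _ j).trans_le (hterm j)
    _ ≤ 2 ^ (n + 1) * (3 ^ n * ∫⁻ p in B ×ˢ I, g p) := by
        rw [ENNReal.tsum_mul_left]
        gcongr
        exact tsum_setLIntegral_preimage_dyadicTripleCube_le measurable_fst _ _ k
    _ = _ := by ring

lemma setLIntegral_dyadicSum_whitneyCoeff_le (hF : Measurable (Function.uncurry F)) {C₀ : ℝ}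
    (hyp : ∀ (c : Fin n → ℝ) (ℓ : ℝ), 0 < ℓ →
      ∫⁻ x in ball c (ℓ / 2), localSqSq n F ℓ x ≤ ENNReal.ofReal (C₀ * ℓ ^ n))
    (hℓ : 0 < ℓ) (K : ℕ) (j₀ : Fin n → ℤ) :
    ∫⁻ x in dyadicCube a ℓ K j₀, dyadicSum a ℓ (whitneyCoeff F a ℓ) K x ≤
      ENNReal.ofReal (2 ^ (n + 1) * 36 ^ n * C₀) * volume (dyadicCube a ℓ K j₀) := by
  obtain ⟨z, hz⟩ := dyadicCube_nonempty hℓ K j₀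
  set s := ℓ / 2 ^ K
  have hs : 0 < s := by positivity
  set B := ball z (3 * s)
  set g : (Fin n → ℝ) × ℝ → ℝ≥0∞ := fun p => ENNReal.ofReal (F p.1 p.2 ^ 2 / p.2)
  have hslabs : ⋃ d, B ×ˢ Set.Ioc (ℓ / 2 ^ (K + d + 1)) (ℓ / 2 ^ (K + d)) ⊆
      B ×ˢ Set.Ioc 0 (3 * s) :=
    Set.iUnion_subset fun d => Set.prod_mono le_rfl (Set.Ioc_subset_Ioc (by positivity)
      ((div_le_div_of_nonneg_left hℓ.le (by positivity)
        (pow_le_pow_right₀ one_le_two (Nat.le_add_right K d))).trans (by linarith)))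
  calc ∫⁻ x in dyadicCube a ℓ K j₀, dyadicSum a ℓ (whitneyCoeff F a ℓ) K x
      = ∑' d, ∫⁻ x in dyadicCube a ℓ K j₀,
          whitneyCoeff F a ℓ (K + d) (dyadicIndex a ℓ (K + d) x) :=
        lintegral_tsum fun d => (measurable_comp_dyadicIndex _ (K + d)).aemeasurable
    _ ≤ ∑' d, 2 ^ (n + 1) * 3 ^ n *
          ∫⁻ p in B ×ˢ Set.Ioc (ℓ / 2 ^ (K + d + 1)) (ℓ / 2 ^ (K + d)), g p :=
        ENNReal.tsum_le_tsum fun d => setLIntegral_whitneyCoeff_le hℓ (Nat.le_add_right K d) hz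
    _ = 2 ^ (n + 1) * 3 ^ n *
          ∫⁻ p in ⋃ d, B ×ˢ Set.Ioc (ℓ / 2 ^ (K + d + 1)) (ℓ / 2 ^ (K + d)), g p := by
        rw [ENNReal.tsum_mul_left, lintegral_iUnion
          (fun _ => measurableSet_ball.prod measurableSet_Ioc)
          (fun d d' hdd' => Set.disjoint_prod.2 (Or.inr
            ((pairwise_disjoint_Ioc_div_two_pow hℓ.le).comp_of_injective
              (add_right_injective K) hdd')))]
    _ ≤ 2 ^ (n + 1) * 3 ^ n * ENNReal.ofReal (C₀ * (4 * (3 * s)) ^ n) := by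
        gcongr
        exact (lintegral_mono_set hslabs).trans
          (setLIntegral_ball_prod_Ioc_le hF hyp z (by positivity))
    _ = ENNReal.ofReal (2 ^ (n + 1) * 36 ^ n * C₀) * volume (dyadicCube a ℓ K j₀) := by
        rw [volume_dyadicCube hℓ, ← ofReal_pow hs.le, ← ofReal_mul' (by positivity),
          ← ofReal_ofNat 2, ← ofReal_ofNat 3, ← ofReal_pow zero_le_two, ← ofReal_pow zero_le_three,
          ← ofReal_mul (by positivity), ← ofReal_mul (by positivity)]
        congr 1
        rw [show (36 : ℝ) ^ n = 3 ^ n * 12 ^ n by rw [← mul_pow]; norm_num]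
        ring

lemma ball_subset_dyadicCube_zero (hℓ : 0 < ℓ) (c : Fin n → ℝ) :
    ball c (ℓ / 2) ⊆ dyadicCube (fun i => c i - ℓ / 2) ℓ 0 0 := fun x hx =>
  (mem_dyadicCube_iff hℓ).2 fun i => by
    have := abs_lt.1 ((dist_pi_lt_iff (by positivity)).1 hx i)
    simp only [Pi.zero_apply, Int.cast_zero, pow_zero, div_one]
    constructor <;> linarith

lemma setLIntegral_localSqSq_rpow_le (hF : Measurable (Function.uncurry F)) {C₀ : ℝ}
    (hyp : ∀ (c : Fin n → ℝ) (ℓ : ℝ), 0 < ℓ →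
      ∫⁻ x in ball c (ℓ / 2), localSqSq n F ℓ x ≤ ENNReal.ofReal (C₀ * ℓ ^ n))
    {q : ℝ} (hq : 0 ≤ q) {m : ℕ} (hqm : q ≤ m) (hℓ : 0 < ℓ) (c : Fin n → ℝ) :
    ∫⁻ x in ball c (ℓ / 2), localSqSq n F ℓ x ^ q ≤
      (1 + m.factorial * ENNReal.ofReal (2 ^ (n + 1) * 36 ^ n * C₀) ^ m) *
        ENNReal.ofReal ℓ ^ n := by
  set a : Fin n → ℝ := fun i => c i - ℓ / 2
  set Q := dyadicCube a ℓ 0 0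
  have hvol : volume Q = ENNReal.ofReal ℓ ^ n := by simp [Q, volume_dyadicCube hℓ]
  calc ∫⁻ x in ball c (ℓ / 2), localSqSq n F ℓ x ^ q
      ≤ ∫⁻ x in Q, (1 + dyadicSum a ℓ (whitneyCoeff F a ℓ) 0 x ^ m) :=
        (lintegral_mono_set (ball_subset_dyadicCube_zero hℓ c)).trans (lintegral_mono fun x =>
          (ENNReal.rpow_le_rpow (localSqSq_le_dyadicSum hℓ x) hq).trans
            (ENNReal.rpow_le_one_add_pow _ hq hqm))
    _ = volume Q + ∫⁻ x in Q, dyadicSum a ℓ (whitneyCoeff F a ℓ) 0 x ^ m := by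
        rw [lintegral_add_left measurable_const, setLIntegral_one]
    _ ≤ volume Q + m.factorial * ENNReal.ofReal (2 ^ (n + 1) * 36 ^ n * C₀) ^ m * volume Q := by
        gcongr
        exact setLIntegral_dyadicSum_pow_le
          (setLIntegral_dyadicSum_whitneyCoeff_le hF hyp hℓ) m 0 0
    _ = _ := by rw [hvol]; ring

end SquareFunction

theorem stmt_3_general (n : ℕ)
    (F : (Fin n → ℝ) → ℝ → ℝ) (hF : Measurable (Function.uncurry F))
    (C₀ : ℝ) (hC₀ : 0 < C₀)
    (hyp : ∀ (c : Fin n → ℝ) (ℓ : ℝ), 0 < ℓ →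
      ∫⁻ x in ball c (ℓ / 2), localSqSq n F ℓ x ≤ ENNReal.ofReal (C₀ * ℓ ^ n)) :
    ∀ p : ℝ, 1 < p → ∃ K : ℝ, 0 < K ∧
      ∀ (c : Fin n → ℝ) (ℓ : ℝ), 0 < ℓ →
        ∫⁻ x in ball c (ℓ / 2), localSqSq n F ℓ x ^ (p / 2) ≤
          ENNReal.ofReal (K * C₀ ^ (p / 2) * ℓ ^ n) := by
  intro p hp
  obtain ⟨m, hpm⟩ := exists_nat_ge (p / 2)
  have hΛ : 0 < 2 ^ (n + 1) * 36 ^ n * C₀ := by positivity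
  have hCp : 0 < C₀ ^ (p / 2) := Real.rpow_pos_of_pos hC₀ _
  refine ⟨(1 + m.factorial * (2 ^ (n + 1) * 36 ^ n * C₀) ^ m) / C₀ ^ (p / 2), by positivity,
    fun c ℓ hℓ => (setLIntegral_localSqSq_rpow_le hF hyp (by linarith) hpm hℓ c).trans_eq ?_⟩
  rw [div_mul_cancel₀ _ hCp.ne', ← ofReal_pow hΛ.le, ← ofReal_pow hℓ.le, ← ofReal_natCast,
    ← ofReal_mul (by positivity), ← ofReal_one, ← ofReal_add zero_le_one (by positivity),
    ← ofReal_mul (by positivity)]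

/-- John–Nirenberg lemma for local square functions: a uniform `L^2` Carleson
bound `∫_Q A_{Q,F}^2 ≤ C₀ |Q|` on all cubes self-improves to
`∫_Q A_{Q,F}^p ≤ K C₀^{p/2} |Q|` for every `p > 1`. -/
theorem stmt_3 (n : ℕ) (hn : 0 < n)
    (F : (Fin n → ℝ) → ℝ → ℝ) (hF : Measurable (Function.uncurry F))
    (hFnn : ∀ y t, 0 ≤ F y t)
    (C₀ : ℝ) (hC₀ : 0 < C₀)
    (hyp : ∀ (c : Fin n → ℝ) (ℓ : ℝ), 0 < ℓ →
      ∫⁻ x in ball c (ℓ / 2), localSqSq n F ℓ x ≤ ENNReal.ofReal (C₀ * ℓ ^ n)) :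
    ∀ p : ℝ, 1 < p → ∃ K : ℝ, 0 < K ∧
      ∀ (c : Fin n → ℝ) (ℓ : ℝ), 0 < ℓ →
        ∫⁻ x in ball c (ℓ / 2), localSqSq n F ℓ x ^ (p / 2) ≤
          ENNReal.ofReal (K * C₀ ^ (p / 2) * ℓ ^ n) :=
  stmt_3_general n F hF C₀ hC₀ hyp
end

section
/- Let $F: \mathbb{R}^{n+1}_+ \to [0,\infty)$ be measurable and $\alpha > 1$. For a cube $Q \subset \mathbb{R}^n$ set $A_{Q,\alpha}(x) := \big( \int_0^{\ell(Q)} \int_{|x-y|<\alpha t} |F(y,t)|^2 \, \frac{dy\,dt}{t^{n+1}} \big)^{1/2}$ and $K_{\alpha} := \sup_{Q} \fint_Q A_{Q,\alpha}^2 \, dx$ (supremum over all cubes). Then $K_{\alpha} \le C(n,\alpha) K_{1}$. -/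
/-
By Tonelli, the Carleson average of the aperture-`β` square function over a cube `Q` of side `ℓ`
is the integral over `ℝⁿ × (0, ℓ)` of `|F(y,t)|² t⁻ⁿ⁻¹` against the weight `|B(y, βt) ∩ Q|`, so the
aperture only enters through this weight. For `t < ℓ` and aperture `α` the weight is at
most `(2αt)ⁿ` and vanishes unless `y` lies in the dilate `(2α + 1)Q`; for aperture `1` it is
at least `tⁿ` as soon as `y ∈ Q`. Covering `(2α + 1)Q` by `N(n, α)` cubes of side `ℓ` gives
`K_α ≤ (2α)ⁿ N K₁`.
-/

open MeasureTheory Metric ENNReal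

/-- The square of the local square function with aperture `α`, over the cube of
center `c` and side length `ℓ` (cubes are sup-norm balls `ball c (ℓ/2)`). -/
noncomputable def apSqSq (n : ℕ) (F : (Fin n → ℝ) → ℝ → ℝ) (α ℓ : ℝ) (x : Fin n → ℝ) : ℝ≥0∞ :=
  ∫⁻ p in {p : (Fin n → ℝ) × ℝ | dist x p.1 < α * p.2 ∧ 0 < p.2 ∧ p.2 < ℓ},
    ENNReal.ofReal (F p.1 p.2 ^ 2 / p.2 ^ (n + 1))

open Set

noncomputable def coneDensity (n : ℕ) (F : (Fin n → ℝ) → ℝ → ℝ) (p : (Fin n → ℝ) × ℝ) : ℝ≥0∞ :=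
  ENNReal.ofReal (F p.1 p.2 ^ 2 / p.2 ^ (n + 1))

lemma measurable_coneDensity {n : ℕ} {F : (Fin n → ℝ) → ℝ → ℝ}
    (hF : Measurable (Function.uncurry F)) : Measurable (coneDensity n F) :=
  ((hF.pow_const 2).div (measurable_snd.pow_const (n + 1))).ennreal_ofReal

lemma measurable_measure_ball_inter {E : Type*} [PseudoMetricSpace E] [MeasurableSpace E]
    [OpensMeasurableSpace E] [SecondCountableTopology E] (μ : Measure E) [SFinite μ]
    {s : Set E} (hs : MeasurableSet s) :
    Measurable fun p : E × ℝ => μ (ball p.1 p.2 ∩ s) :=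
  measurable_measure_prodMk_left <|
    (measurableSet_lt (f := fun q : (E × ℝ) × E => dist q.2 q.1.1) (g := fun q => q.1.2)
      (by fun_prop) (by fun_prop)).inter (measurable_snd hs)

lemma setLIntegral_apSqSq {n : ℕ} {F : (Fin n → ℝ) → ℝ → ℝ}
    (hF : Measurable (Function.uncurry F)) (α ℓ : ℝ) (s : Set (Fin n → ℝ)) :
    ∫⁻ x in s, apSqSq n F α ℓ x =
      ∫⁻ p in univ ×ˢ Ioo 0 ℓ, coneDensity n F p * volume (ball p.1 (α * p.2) ∩ s) := by
  set cone := {q : (Fin n → ℝ) × (Fin n → ℝ) × ℝ | dist q.1 q.2.1 < α * q.2.2}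
  have hcone : MeasurableSet cone := measurableSet_lt (by fun_prop) (by fun_prop)
  calc ∫⁻ x in s, apSqSq n F α ℓ x
      = ∫⁻ x in s, ∫⁻ p in univ ×ˢ Ioo 0 ℓ,
          cone.indicator (fun q => coneDensity n F q.2) (x, p) := by
        refine lintegral_congr fun x => ?_
        have hx : MeasurableSet (Prod.mk x ⁻¹' cone) := measurable_prodMk_left hcone
        have h : ∀ p, cone.indicator (fun q => coneDensity n F q.2) (x, p) =
            (Prod.mk x ⁻¹' cone).indicator (coneDensity n F) p := fun p => rfl
        simp_rw [h]
        rw [setLIntegral_indicator hx, apSqSq]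
        congr 2
        ext p
        simp [cone]
    _ = ∫⁻ p in univ ×ˢ Ioo 0 ℓ, ∫⁻ x in s, cone.indicator (fun q => coneDensity n F q.2) (x, p) :=
        lintegral_lintegral_swap
          (((measurable_coneDensity hF).comp measurable_snd).indicator hcone).aemeasurable
    _ = _ := by
        refine lintegral_congr fun p => ?_
        have hp : (fun x => cone.indicator (fun q => coneDensity n F q.2) (x, p)) =
            (ball p.1 (α * p.2)).indicator (fun _ => coneDensity n F p) := by
          ext x
          classical
          simp only [cone, indicator_apply, mem_ofPred_eq, mem_ball]
        rw [hp, lintegral_indicator_const measurableSet_ball,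
          Measure.restrict_apply measurableSet_ball]

lemma exists_ball_subset_ball_inter_ball {E : Type*} [NormedAddCommGroup E] [NormedSpace ℝ E]
    {y c : E} {r R : ℝ} (hy : dist y c < R) (hr : 0 < r) (hrR : r ≤ 2 * R) :
    ∃ z, ball z (r / 2) ⊆ ball y r ∩ ball c R := by
  have hR : 0 < R := dist_nonneg.trans_lt hy
  set θ := r / (2 * R)
  have hθ : θ * R = r / 2 := by simp only [θ]; field_simp
  have hθ0 : 0 ≤ θ := by positivity
  have hθ1 : θ ≤ 1 := div_le_one_of_le₀ hrR (by positivity)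
  refine ⟨AffineMap.lineMap y c θ, fun x hx => ⟨?_, ?_⟩⟩
  · have hzy := dist_lineMap_left y c θ
    rw [Real.norm_of_nonneg hθ0] at hzy
    have : θ * dist y c ≤ θ * R := mul_le_mul_of_nonneg_left hy.le hθ0
    rw [mem_ball] at hx ⊢
    linarith [dist_triangle x (AffineMap.lineMap y c θ) y]
  · have hzc := dist_lineMap_right y c θ
    rw [Real.norm_of_nonneg (sub_nonneg.2 hθ1)] at hzc
    have : (1 - θ) * dist y c ≤ (1 - θ) * R := mul_le_mul_of_nonneg_left hy.le (sub_nonneg.2 hθ1)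
    rw [mem_ball] at hx ⊢
    linarith [dist_triangle x (AffineMap.lineMap y c θ) c]

lemma ofReal_pow_le_volume_ball_inter_ball {n : ℕ} {y c : Fin n → ℝ} {t ℓ : ℝ}
    (hy : y ∈ ball c (ℓ / 2)) (ht : 0 < t) (htℓ : t ≤ ℓ) :
    ENNReal.ofReal (t ^ n) ≤ volume (ball y t ∩ ball c (ℓ / 2)) := by
  obtain ⟨z, hz⟩ := exists_ball_subset_ball_inter_ball (mem_ball.1 hy) ht (by linarith)
  calc ENNReal.ofReal (t ^ n) = volume (ball z (t / 2)) := by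
        rw [Real.volume_pi_ball z (half_pos ht), Fintype.card_fin, mul_div_cancel₀ t two_ne_zero]
    _ ≤ volume (ball y t ∩ ball c (ℓ / 2)) := measure_mono hz

lemma exists_finset_ball_subset_biUnion_ball {E : Type*} [NormedAddCommGroup E]
    [NormedSpace ℝ E] [ProperSpace E] (R : ℝ) :
    ∃ S : Finset E, ∀ (c : E) {ℓ : ℝ}, 0 < ℓ →
      ball c (R * ℓ) ⊆ ⋃ z ∈ S, ball (c + ℓ • z) (ℓ / 2) := by
  obtain ⟨T, -, hT, hcover⟩ :=
    finite_cover_balls_of_compact (isCompact_closedBall (0 : E) R) one_half_pos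
  refine ⟨hT.toFinset, fun c ℓ hℓ y hy => ?_⟩
  have hy' : ℓ⁻¹ • (y - c) ∈ closedBall (0 : E) R := by
    rw [mem_closedBall_zero_iff, norm_smul, Real.norm_of_nonneg (inv_nonneg.2 hℓ.le),
      inv_mul_le_iff₀ hℓ, mul_comm, ← dist_eq_norm]
    exact (mem_ball.1 hy).le
  obtain ⟨z, hzT, hz⟩ := mem_iUnion₂.1 (hcover hy')
  refine mem_iUnion₂.2 ⟨z, hT.mem_toFinset.2 hzT, ?_⟩
  rw [mem_ball, dist_eq_norm] at hz ⊢
  calc ‖y - (c + ℓ • z)‖ = ‖ℓ • (ℓ⁻¹ • (y - c) - z)‖ := by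
        rw [smul_sub, smul_inv_smul₀ hℓ.ne', sub_sub]
    _ = ℓ * ‖ℓ⁻¹ • (y - c) - z‖ := by rw [norm_smul, Real.norm_of_nonneg hℓ.le]
    _ < ℓ * (1 / 2) := mul_lt_mul_of_pos_left hz hℓ
    _ = ℓ / 2 := by ring

lemma volume_ball_inter_ball_le_sum {n : ℕ} {α ℓ t : ℝ} (hα : 0 < α) (ht : t ∈ Ioo 0 ℓ)
    {c y : Fin n → ℝ} {S : Finset (Fin n → ℝ)}
    (hS : ball c ((α + 1 / 2) * ℓ) ⊆ ⋃ z ∈ S, ball (c + ℓ • z) (ℓ / 2)) :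
    volume (ball y (α * t) ∩ ball c (ℓ / 2)) ≤
      ENNReal.ofReal ((2 * α) ^ n) * ∑ z ∈ S, volume (ball y t ∩ ball (c + ℓ • z) (ℓ / 2)) := by
  rcases (ball y (α * t) ∩ ball c (ℓ / 2)).eq_empty_or_nonempty with h | ⟨x, hxy, hxc⟩
  · simp [h]
  have hy : y ∈ ball c ((α + 1 / 2) * ℓ) := by
    have : α * t < α * ℓ := mul_lt_mul_of_pos_left ht.2 hα
    rw [mem_ball] at hxy hxc ⊢
    linarith [dist_triangle_left y c x]
  obtain ⟨z, hzS, hyz⟩ := mem_iUnion₂.1 (hS hy)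
  calc volume (ball y (α * t) ∩ ball c (ℓ / 2))
      ≤ volume (ball y (α * t)) := measure_mono inter_subset_left
    _ = ENNReal.ofReal ((2 * α) ^ n) * ENNReal.ofReal (t ^ n) := by
        rw [Real.volume_pi_ball y (mul_pos hα ht.1), Fintype.card_fin, ← ENNReal.ofReal_mul
          (by positivity), ← mul_pow, mul_assoc]
    _ ≤ ENNReal.ofReal ((2 * α) ^ n) * volume (ball y t ∩ ball (c + ℓ • z) (ℓ / 2)) := by
        gcongr
        exact ofReal_pow_le_volume_ball_inter_ball hyz ht.1 ht.2.le
    _ ≤ _ := by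
        gcongr
        exact Finset.single_le_sum (f := fun z => volume (ball y t ∩ ball (c + ℓ • z) (ℓ / 2)))
          (fun _ _ => zero_le) hzS

lemma setLIntegral_apSqSq_le_sum_of_cover {n : ℕ} {F : (Fin n → ℝ) → ℝ → ℝ}
    (hF : Measurable (Function.uncurry F)) {α ℓ : ℝ} (hα : 0 < α) {c : Fin n → ℝ}
    {S : Finset (Fin n → ℝ)} (hS : ball c ((α + 1 / 2) * ℓ) ⊆ ⋃ z ∈ S, ball (c + ℓ • z) (ℓ / 2)) :
    ∫⁻ x in ball c (ℓ / 2), apSqSq n F α ℓ x ≤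
      ENNReal.ofReal ((2 * α) ^ n) *
        ∑ z ∈ S, ∫⁻ x in ball (c + ℓ • z) (ℓ / 2), apSqSq n F 1 ℓ x := by
  have hT : MeasurableSet (univ ×ˢ Ioo 0 ℓ : Set ((Fin n → ℝ) × ℝ)) :=
    MeasurableSet.univ.prod measurableSet_Ioo
  simp only [setLIntegral_apSqSq hF, one_mul]
  rw [← lintegral_finsetSum', ← lintegral_const_mul' _ _ ofReal_ne_top]
  · refine setLIntegral_mono' hT fun p hp => ?_
    simp only [← Finset.mul_sum, mul_left_comm _ (coneDensity n F p)]
    gcongr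
    exact volume_ball_inter_ball_le_sum hα hp.2 hS
  · exact fun z _ => ((measurable_coneDensity hF).mul
      (measurable_measure_ball_inter volume measurableSet_ball)).aemeasurable

theorem stmt_4_general (n : ℕ) (α : ℝ) (hα : 1 < α) :
    ∃ C : ℝ, 0 < C ∧
      ∀ F : (Fin n → ℝ) → ℝ → ℝ, Measurable (Function.uncurry F) →
        (∀ y t, 0 ≤ F y t) →
      ∀ K : ℝ, 0 ≤ K →
        (∀ (c : Fin n → ℝ) (ℓ : ℝ), 0 < ℓ →
          ∫⁻ x in ball c (ℓ / 2), apSqSq n F 1 ℓ x ≤ ENNReal.ofReal (K * ℓ ^ n)) →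
        ∀ (c : Fin n → ℝ) (ℓ : ℝ), 0 < ℓ →
          ∫⁻ x in ball c (ℓ / 2), apSqSq n F α ℓ x ≤ ENNReal.ofReal (C * K * ℓ ^ n) := by
  have hα₀ : 0 < α := one_pos.trans hα
  obtain ⟨S, hS⟩ := exists_finset_ball_subset_biUnion_ball (E := Fin n → ℝ) (α + 1 / 2)
  have hSne : S.Nonempty := by
    obtain ⟨z, hz, -⟩ := mem_iUnion₂.1 (hS 0 one_pos (mem_ball_self (by linarith)))
    exact ⟨z, hz⟩
  refine ⟨(2 * α) ^ n * S.card, by positivity, fun F hF _ K _ hK₁ c ℓ hℓ => ?_⟩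
  have h2α : 0 ≤ (2 * α) ^ n := by positivity
  calc ∫⁻ x in ball c (ℓ / 2), apSqSq n F α ℓ x
      ≤ ENNReal.ofReal ((2 * α) ^ n) *
          ∑ z ∈ S, ∫⁻ x in ball (c + ℓ • z) (ℓ / 2), apSqSq n F 1 ℓ x :=
        setLIntegral_apSqSq_le_sum_of_cover hF hα₀ (hS c hℓ)
    _ ≤ ENNReal.ofReal ((2 * α) ^ n) * ∑ z ∈ S, ENNReal.ofReal (K * ℓ ^ n) := by
        gcongr with z
        exact hK₁ _ ℓ hℓ
    _ = ENNReal.ofReal ((2 * α) ^ n * S.card * K * ℓ ^ n) := by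
        rw [Finset.sum_const, nsmul_eq_mul, ← ENNReal.ofReal_natCast, ← mul_assoc,
          ← ENNReal.ofReal_mul h2α, ← ENNReal.ofReal_mul (by positivity), mul_assoc _ K]

/-- Change of aperture for local square functions at the level of `L²` Carleson
averages: `K_α ≤ C(n,α) K_1`. -/
theorem stmt_4 (n : ℕ) (hn : 0 < n) (α : ℝ) (hα : 1 < α) :
    ∃ C : ℝ, 0 < C ∧
      ∀ F : (Fin n → ℝ) → ℝ → ℝ, Measurable (Function.uncurry F) →
        (∀ y t, 0 ≤ F y t) →
      ∀ K : ℝ, 0 ≤ K →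
        (∀ (c : Fin n → ℝ) (ℓ : ℝ), 0 < ℓ →
          ∫⁻ x in ball c (ℓ / 2), apSqSq n F 1 ℓ x ≤ ENNReal.ofReal (K * ℓ ^ n)) →
        ∀ (c : Fin n → ℝ) (ℓ : ℝ), 0 < ℓ →
          ∫⁻ x in ball c (ℓ / 2), apSqSq n F α ℓ x ≤ ENNReal.ofReal (C * K * ℓ ^ n) :=
  stmt_4_general n α hα
end
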